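/- arXiv:2404.10656 — 2 statements merged into one kernel-verified Lean document; each statement's English description precedes it below -/
import Mathlib

section
/- For every n ≥ 3, the set X = {x_1,…,x_n} is a modular flat of Θ_n, and the restriction Θ_n|X is isomorphic to the rank-2 uniform matroid U_{2,n}. -/
open Matroid Set

variable {α : Type*}

/-- The rank of a set `X` in a matroid `M`: the supremum of the cardinalities of the
independent subsets of `X`. -/
noncomputable def mRk (M : Matroid α) (X : Set α) : ℕ :=
  sSup {n : ℕ | ∃ I, M.Indep I ∧ I ⊆ X ∧ I.ncard = n}

/-- The rank of a matroid `M`. -/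
noncomputable def mRank (M : Matroid α) : ℕ := mRk M M.E

/-- `T` is a modular flat of `M`: `T` is a flat and
`r(T) + r(F) = r(T ∩ F) + r(T ∪ F)` holds for every flat `F` of `M`. -/
def IsModFlat (M : Matroid α) (T : Set α) : Prop :=
  M.IsFlat T ∧ ∀ F, M.IsFlat F → mRk M T + mRk M F = mRk M (T ∩ F) + mRk M (T ∪ F)

/-- `H` is a hyperplane of `M`: a flat of rank `r(M) - 1`. -/
def IsHyp (M : Matroid α) (H : Set α) : Prop :=
  M.IsFlat H ∧ mRk M H + 1 = mRank M

/-- `F` is a corank-2 flat of `M`: a flat of rank `r(M) - 2`. -/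
def IsCr2Flat (M : Matroid α) (F : Set α) : Prop :=
  M.IsFlat F ∧ mRk M F + 2 = mRank M

/-- `F` is a corank-3 flat of `M`: a flat of rank `r(M) - 3`. -/
def IsCr3Flat (M : Matroid α) (F : Set α) : Prop :=
  M.IsFlat F ∧ mRk M F + 3 = mRank M

/-- `(H1, H2, H3)` is a modular triple of hyperplanes of `M`: the three sets are
hyperplanes, `F = H1 ∩ H2 ∩ H3` is a corank-2 flat, and `Hi ∩ Hj = F` for all `i ≠ j`. -/
def ModTriple (M : Matroid α) (H1 H2 H3 : Set α) : Prop :=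
  IsHyp M H1 ∧ IsHyp M H2 ∧ IsHyp M H3 ∧
  IsCr2Flat M (H1 ∩ H2 ∩ H3) ∧
  H1 ∩ H2 = H1 ∩ H2 ∩ H3 ∧ H1 ∩ H3 = H1 ∩ H2 ∩ H3 ∧ H2 ∩ H3 = H1 ∩ H2 ∩ H3

/-- `M` is the generalized parallel connection of `M1` and `M2`: its ground set is
`M1.E ∪ M2.E`, and its flats are exactly the sets `F ⊆ M1.E ∪ M2.E` such that
`F ∩ M1.E` is a flat of `M1` and `F ∩ M2.E` is a flat of `M2`. -/
def IsGPC (M1 M2 M : Matroid α) : Prop :=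
  M.E = M1.E ∪ M2.E ∧
    ∀ F : Set α, M.IsFlat F ↔ F ⊆ M1.E ∪ M2.E ∧ M1.IsFlat (F ∩ M1.E) ∧ M2.IsFlat (F ∩ M2.E)

/-- The deletion `M \ D` of a set `D` from `M`. -/
def mDelete (M : Matroid α) (D : Set α) : Matroid α := M ↾ (M.E \ D)

/-- The contraction `M / C`, obtained via duality as `(M✶ \ C)✶`. -/
def mContract (M : Matroid α) (C : Set α) : Matroid α := (M✶ ↾ (M.E \ C))✶

/-- `N` is a minor of `M`: `N` is obtained from `M` by a contraction followed by a
deletion. -/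
def MinorOf (N M : Matroid α) : Prop :=
  ∃ C D : Set α, C ⊆ M.E ∧ D ⊆ M.E ∧ Disjoint C D ∧
    N = (mContract M C) ↾ ((M.E \ C) \ D)

/-- `C` is a circuit of `M`: a minimal dependent subset of the ground set. -/
def MCircuit (M : Matroid α) (C : Set α) : Prop :=
  C ⊆ M.E ∧ ¬ M.Indep C ∧ ∀ D ⊂ C, M.Indep D

/-- `e` is a loop of `M`. -/
def MLoop (M : Matroid α) (e : α) : Prop := e ∈ M.E ∧ ¬ M.Indep {e}

/-- `e` is a coloop of `M`: an element of the ground set lying in every base. -/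
def MColoop (M : Matroid α) (e : α) : Prop := e ∈ M.E ∧ ∀ B, M.IsBase B → e ∈ B

/-- `M` is simple: every subset of the ground set with at most two elements is
independent; equivalently, `M` has no loops and no two-element circuits. -/
def MSimple (M : Matroid α) : Prop := ∀ S ⊆ M.E, S.ncard ≤ 2 → M.Indep S

/-- `X` is co-independent in `M`: the complement `M.E \ X` is spanning. -/
def MCoindep (M : Matroid α) (X : Set α) : Prop := M.Spanning (M.E \ X)

/-- The connected component of `M` containing `e`: the set of `f` in the ground set with
`e = f` or some circuit containing both `e` and `f`. -/
def MComponentOf (M : Matroid α) (e : α) : Set α :=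
  {f | f ∈ M.E ∧ (e = f ∨ ∃ C, MCircuit M C ∧ e ∈ C ∧ f ∈ C)}

/-- `K` is a connected component of `M`. -/
def MComponent (M : Matroid α) (K : Set α) : Prop :=
  ∃ e ∈ M.E, K = MComponentOf M e

/-- The restriction `M|X` is (isomorphic to) the rank-2 uniform matroid `U_{2,n}`:
`X` is an `n`-element subset of the ground set and a subset of `X` is independent
exactly when it has at most 2 elements. -/
def RestrIsU2 (M : Matroid α) (X : Set α) (n : ℕ) : Prop :=
  X ⊆ M.E ∧ X.ncard = n ∧ ∀ S ⊆ X, (M.Indep S ↔ S.ncard ≤ 2)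

/-- `Θ` is a copy of the matroid `Θ_n`, with `X = {x 1, …, x n}` and `Y = {y 1, …, y n}`
disjoint, whose bases are exactly `Y`, the sets `(Y \ {y i}) ∪ {x j}` for `i ≠ j`, and
the sets `(Y \ Y') ∪ X'` with `Y' ⊆ Y`, `X' ⊆ X`, `|Y'| = |X'| = 2`. -/
def IsTheta (n : ℕ) (x y : Fin n → α) (Θ : Matroid α) : Prop :=
  Function.Injective x ∧ Function.Injective y ∧ (∀ i j, x i ≠ y j) ∧
  Θ.E = Set.range x ∪ Set.range y ∧
  ∀ B : Set α, Θ.IsBase B ↔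
    (B = Set.range y ∨
    (∃ i j, i ≠ j ∧ B = (Set.range y \ {y i}) ∪ {x j}) ∨
    (∃ P Q : Set (Fin n), P.ncard = 2 ∧ Q.ncard = 2 ∧
      B = (Set.range y \ (y '' P)) ∪ x '' Q))

/-- `M` is representable over the field `K`: there is a map from the ground set to a
`K`-vector space under which a subset of the ground set is independent in `M` exactly
when its image (as a family) is linearly independent. -/
def RepOver (K : Type*) [Field K] {α : Type*} (M : Matroid α) : Prop :=
  ∃ (V : Type) (_ : AddCommGroup V) (_ : Module K V) (φ : α → V),
    ∀ I ⊆ M.E, (M.Indep I ↔ LinearIndependent K (fun e : I => φ e.1))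

/-! ### Auxiliary lemmas for Statement 13 -/

namespace ThetaAux

variable {n : ℕ} {x y : Fin n → α} {Θ : Matroid α} {M : Matroid α}

lemma mRk_eq_of {X : Set α} {k : ℕ}
    (h1 : ∃ I, M.Indep I ∧ I ⊆ X ∧ I.ncard = k)
    (h2 : ∀ I, M.Indep I → I ⊆ X → I.ncard ≤ k) :
    mRk M X = k := by
  have hub : ∀ m ∈ {m : ℕ | ∃ I, M.Indep I ∧ I ⊆ X ∧ I.ncard = m}, m ≤ k := by
    rintro m ⟨I, hI, hIX, rfl⟩; exact h2 I hI hIX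
  exact le_antisymm (csSup_le ⟨k, h1⟩ hub) (le_csSup ⟨k, hub⟩ h1)

lemma univ_ncard : (Set.univ : Set (Fin n)).ncard = n := by
  rw [Set.ncard_univ, Nat.card_eq_fintype_card, Fintype.card_fin]

lemma exists_supset_ncard {T : Set (Fin n)} {k : ℕ} (h1 : T.ncard ≤ k) (h2 : k ≤ n) :
    ∃ Q : Set (Fin n), T ⊆ Q ∧ Q.ncard = k := by
  have hc : k - T.ncard ≤ Tᶜ.ncard := by
    have h := Set.ncard_add_ncard_compl T
    rw [Nat.card_eq_fintype_card, Fintype.card_fin] at h; omega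
  obtain ⟨R, hRsub, hRcard⟩ := Set.exists_subset_card_eq hc
  refine ⟨T ∪ R, Set.subset_union_left, ?_⟩
  rw [Set.ncard_union_eq ((disjoint_compl_right (a := T)).mono_right hRsub)]
  omega

section Theta

variable (hΘ : IsTheta n x y Θ)
include hΘ

lemma hx : Function.Injective x := hΘ.1
lemma hy : Function.Injective y := hΘ.2.1
lemma hxy : ∀ i j, x i ≠ y j := hΘ.2.2.1
lemma hE : Θ.E = Set.range x ∪ Set.range y := hΘ.2.2.2.1
lemma hB : ∀ B : Set α, Θ.IsBase B ↔
    (B = Set.range y ∨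
    (∃ i j, i ≠ j ∧ B = (Set.range y \ {y i}) ∪ {x j}) ∨
    (∃ P Q : Set (Fin n), P.ncard = 2 ∧ Q.ncard = 2 ∧
      B = (Set.range y \ (y '' P)) ∪ x '' Q)) := hΘ.2.2.2.2

lemma disjXY : Disjoint (Set.range x) (Set.range y) := by
  rw [Set.disjoint_left]
  rintro a ⟨i, rfl⟩ ⟨j, hj⟩
  exact hxy hΘ i j hj.symm

lemma xnotY (j : Fin n) : x j ∉ Set.range y := by
  rintro ⟨i, hi⟩; exact hxy hΘ j i hi.symm

lemma ynotX (i : Fin n) : y i ∉ Set.range x := by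
  rintro ⟨j, hj⟩; exact hxy hΘ j i hj

lemma finE : Θ.E.Finite := by
  rw [hE hΘ]; exact (Set.finite_range x).union (Set.finite_range y)

lemma rangeY_ncard : (Set.range y).ncard = n := by
  rw [← Set.image_univ, Set.ncard_image_of_injective _ (hy hΘ), univ_ncard]

lemma rangeX_ncard : (Set.range x).ncard = n := by
  rw [← Set.image_univ, Set.ncard_image_of_injective _ (hx hΘ), univ_ncard]

lemma base_Y : Θ.IsBase (Set.range y) := (hB hΘ _).2 (Or.inl rfl)

lemma indep_sub_Y {S : Set α} (hS : S ⊆ Set.range y) : Θ.Indep S :=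
  (base_Y hΘ).indep.subset hS

lemma indep_mix (hn : 2 ≤ n) {T Q : Set (Fin n)} (hT : T.ncard + 2 ≤ n) (hQ : Q.ncard ≤ 2) :
    Θ.Indep (y '' T ∪ x '' Q) := by
  obtain ⟨Q', hQQ', hQ'⟩ := exists_supset_ncard hQ hn
  have hTc : 2 ≤ Tᶜ.ncard := by
    have h := Set.ncard_add_ncard_compl T
    rw [Nat.card_eq_fintype_card, Fintype.card_fin] at h; omega
  obtain ⟨P, hPsub, hP⟩ := Set.exists_subset_card_eq hTc
  have hbase : Θ.IsBase ((Set.range y \ y '' P) ∪ x '' Q') :=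
    (hB hΘ _).2 (Or.inr (Or.inr ⟨P, Q', hP, hQ', rfl⟩))
  refine hbase.indep.subset (Set.union_subset_union ?_ (Set.image_mono hQQ'))
  rintro a ⟨t, htT, rfl⟩
  refine ⟨⟨t, rfl⟩, ?_⟩
  rintro ⟨p, hpP, hpt⟩
  exact hPsub hpP ((hy hΘ hpt) ▸ htT)

lemma base_ncard (hn : 2 ≤ n) {B : Set α} (hBase : Θ.IsBase B) : B.ncard = n := by
  rcases (hB hΘ B).1 hBase with rfl | ⟨i, j, hij, rfl⟩ | ⟨P, Q, hP, hQ, rfl⟩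
  · exact rangeY_ncard hΘ
  · rw [Set.ncard_union_eq (by simp [Set.disjoint_singleton_right, xnotY hΘ j])
      (((Set.finite_range y).diff)) (Set.finite_singleton _),
      Set.ncard_diff (Set.singleton_subset_iff.2 (Set.mem_range_self i)) (Set.finite_singleton _),
      Set.ncard_singleton, Set.ncard_singleton, rangeY_ncard hΘ]
    omega
  · have hdisj : Disjoint (Set.range y \ y '' P) (x '' Q) := by
      rw [Set.disjoint_right]
      rintro a ⟨q, hq, rfl⟩ ⟨hmem, -⟩
      exact xnotY hΘ q hmem
    rw [Set.ncard_union_eq hdisj ((Set.finite_range y).diff) (Q.toFinite.image x),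
      Set.ncard_diff (Set.image_subset_range y P)
        ((Set.finite_range y).subset (Set.image_subset_range y P)),
      Set.ncard_image_of_injective _ (hy hΘ), Set.ncard_image_of_injective _ (hx hΘ),
      rangeY_ncard hΘ, hP, hQ]
    omega

lemma indep_finite {I : Set α} (hI : Θ.Indep I) : I.Finite :=
  (finE hΘ).subset hI.subset_ground

lemma indep_le_n (hn : 2 ≤ n) {I : Set α} (hI : Θ.Indep I) : I.ncard ≤ n := by
  obtain ⟨B, hBase, hIB⟩ := hI.exists_isBase_superset
  have hBfin : B.Finite := (finE hΘ).subset hBase.subset_ground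
  calc I.ncard ≤ B.ncard := Set.ncard_le_ncard hIB hBfin
    _ = n := base_ncard hΘ hn hBase

lemma base_inter_X (hn : 2 ≤ n) {B : Set α} (hBase : Θ.IsBase B) :
    (B ∩ Set.range x).ncard ≤ 2 := by
  rcases (hB hΘ B).1 hBase with rfl | ⟨i, j, hij, rfl⟩ | ⟨P, Q, hP, hQ, rfl⟩
  · rw [Set.inter_comm, (disjXY hΘ).inter_eq, Set.ncard_empty]; omega
  · have hsub : ((Set.range y \ {y i}) ∪ {x j}) ∩ Set.range x ⊆ {x j} := by
      rintro a ⟨(⟨hay, -⟩ | ha), hax⟩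
      · exact absurd hay (by obtain ⟨i, rfl⟩ := hax; exact xnotY hΘ i)
      · exact ha
    calc _ ≤ ({x j} : Set α).ncard := Set.ncard_le_ncard hsub (Set.finite_singleton _)
      _ ≤ 2 := by rw [Set.ncard_singleton]; omega
  · have hsub : ((Set.range y \ y '' P) ∪ x '' Q) ∩ Set.range x ⊆ x '' Q := by
      rintro a ⟨(⟨hay, -⟩ | ha), hax⟩
      · exact absurd hay (by obtain ⟨i, rfl⟩ := hax; exact xnotY hΘ i)
      · exact ha
    calc _ ≤ (x '' Q).ncard := Set.ncard_le_ncard hsub (Q.toFinite.image x)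
      _ = 2 := by rw [Set.ncard_image_of_injective _ (hx hΘ), hQ]

lemma indep_inter_X (hn : 2 ≤ n) {I : Set α} (hI : Θ.Indep I) :
    (I ∩ Set.range x).ncard ≤ 2 := by
  obtain ⟨B, hBase, hIB⟩ := hI.exists_isBase_superset
  calc (I ∩ Set.range x).ncard ≤ (B ∩ Set.range x).ncard :=
        Set.ncard_le_ncard (Set.inter_subset_inter_left _ hIB)
          (((finE hΘ).subset hBase.subset_ground).subset Set.inter_subset_left)
    _ ≤ 2 := base_inter_X hΘ hn hBase

lemma indep_subset_X_iff (hn : 3 ≤ n) {S : Set α} (hSX : S ⊆ Set.range x) :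
    Θ.Indep S ↔ S.ncard ≤ 2 := by
  constructor
  · intro hI
    have := indep_inter_X hΘ (by omega) hI
    rwa [Set.inter_eq_left.2 hSX] at this
  · intro hS
    have hSimg : x '' (x ⁻¹' S) = S := by
      rw [Set.image_preimage_eq_inter_range, Set.inter_eq_left.2 hSX]
    have : Θ.Indep (y '' (∅ : Set (Fin n)) ∪ x '' (x ⁻¹' S)) := by
      refine indep_mix hΘ (by omega) (by rw [Set.ncard_empty]; omega) ?_
      rw [← Set.ncard_image_of_injective (x ⁻¹' S) (hx hΘ), hSimg]; exact hS
    rwa [Set.image_empty, Set.empty_union, hSimg] at this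

lemma exists_ne_index (hn : 3 ≤ n) (j : Fin n) : ∃ l : Fin n, l ≠ j := by
  have : Nontrivial (Fin n) := Fin.nontrivial_iff_two_le.mpr (by omega)
  exact exists_ne j

/-- The set `{x j} ∪ (Y \ {y j})` is dependent. -/
lemma dep_D1 (hn : 3 ≤ n) (j : Fin n) : ¬ Θ.Indep ({x j} ∪ (Set.range y \ {y j})) := by
  intro hI
  set S : Set α := {x j} ∪ (Set.range y \ {y j}) with hS
  have hdisj : Disjoint ({x j} : Set α) (Set.range y \ {y j}) := by
    rw [Set.disjoint_singleton_left]
    rintro ⟨hmem, -⟩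
    exact xnotY hΘ j hmem
  have hScard : S.ncard = n := by
    rw [hS, Set.ncard_union_eq hdisj (Set.finite_singleton _) ((Set.finite_range y).diff),
      Set.ncard_singleton,
      Set.ncard_diff (Set.singleton_subset_iff.2 (Set.mem_range_self j)) (Set.finite_singleton _),
      Set.ncard_singleton, rangeY_ncard hΘ]
    omega
  obtain ⟨B, hBase, hSB⟩ := hI.exists_isBase_superset
  have hBfin : B.Finite := (finE hΘ).subset hBase.subset_ground
  have hSeqB : S = B := Set.eq_of_subset_of_ncard_le hSB
    (by rw [hScard, base_ncard hΘ (by omega) hBase]) hBfin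
  have hxjS : x j ∈ S := Or.inl rfl
  rcases (hB hΘ B).1 hBase with hform | ⟨i, k, hik, hform⟩ | ⟨P, Q, hP, hQ, hform⟩
  · rw [hSeqB, hform] at hxjS
    exact xnotY hΘ j hxjS
  · rw [hSeqB, hform] at hxjS
    rcases hxjS with ⟨hmem, -⟩ | hxjk
    · exact xnotY hΘ j hmem
    · have hkj : k = j := hx hΘ (Set.mem_singleton_iff.1 hxjk).symm
      have hyiS : y i ∉ S := by
        rw [hSeqB, hform]
        rintro (⟨-, hyi⟩ | hyi)
        · exact hyi rfl
        · exact xnotY hΘ k ((Set.mem_singleton_iff.1 hyi) ▸ Set.mem_range_self i)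
      have : y i ∈ S := by
        rw [hS]
        right
        refine ⟨Set.mem_range_self i, ?_⟩
        intro hyij
        exact hik (hkj ▸ hy hΘ (Set.mem_singleton_iff.1 hyij))
      exact hyiS this
  · have hinter : S ∩ Set.range x = {x j} := by
      apply Set.Subset.antisymm
      · rintro a ⟨(ha | ⟨hay, -⟩), hax⟩
        · exact ha
        · exact absurd hay (by obtain ⟨i, rfl⟩ := hax; exact xnotY hΘ i)
      · rintro a ha
        exact ⟨Or.inl ha, (Set.mem_singleton_iff.1 ha) ▸ Set.mem_range_self j⟩
    have hinterB : B ∩ Set.range x = x '' Q := by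
      rw [hform]
      apply Set.Subset.antisymm
      · rintro a ⟨(⟨hay, -⟩ | ha), hax⟩
        · exact absurd hay (by obtain ⟨i, rfl⟩ := hax; exact xnotY hΘ i)
        · exact ha
      · rintro a ⟨q, hq, rfl⟩
        exact ⟨Or.inr ⟨q, hq, rfl⟩, Set.mem_range_self q⟩
    rw [hSeqB, hinterB] at hinter
    have : (x '' Q).ncard = 1 := by rw [hinter, Set.ncard_singleton]
    rw [Set.ncard_image_of_injective _ (hx hΘ), hQ] at this
    omega

lemma flat_eq_ground_of_base_subset {F B : Set α} (hF : Θ.IsFlat F) (hBase : Θ.IsBase B)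
    (hBF : B ⊆ F) : F = Θ.E := by
  refine Set.Subset.antisymm hF.subset_ground ?_
  have h1 : Θ.closure B ⊆ Θ.closure F := Θ.closure_subset_closure hBF
  rw [hBase.closure_eq, hF.closure] at h1
  exact h1

lemma mem_closure_of_dep {I : Set α} {e : α} (hI : Θ.Indep I) (he : e ∈ Θ.E) (heI : e ∉ I)
    (hdep : ¬ Θ.Indep (insert e I)) : e ∈ Θ.closure I := by
  by_contra h
  exact hdep ((hI.insert_indep_iff_of_notMem heI).2 ⟨he, h⟩)

lemma X_flat (hn : 3 ≤ n) : Θ.IsFlat (Set.range x) := by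
  constructor
  · intro I X' hI hIX' e heX'
    have heCl : e ∈ Θ.closure I := hIX'.subset_closure heX'
    have heE : e ∈ Θ.E := hIX'.subset_ground heX'
    have hIx : I ⊆ Set.range x := hI.subset
    rcases (hE hΘ ▸ heE) with hex | ⟨k, rfl⟩
    · exact hex
    · exfalso
      have hIcard : I.ncard ≤ 2 := (indep_subset_X_iff hΘ hn hIx).1 hI.indep
      have hykI : y k ∉ I := fun h => ynotX hΘ k (hIx h)
      have hIndep : Θ.Indep (insert (y k) I) := by
        have himg : x '' (x ⁻¹' I) = I := by
          rw [Set.image_preimage_eq_inter_range, Set.inter_eq_left.2 hIx]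
        have := indep_mix hΘ (n := n) (by omega) (T := {k}) (Q := x ⁻¹' I)
          (by rw [Set.ncard_singleton]; omega)
          (by rw [← Set.ncard_image_of_injective (x ⁻¹' I) (hx hΘ), himg]; exact hIcard)
        rwa [Set.image_singleton, himg, Set.singleton_union] at this
      rw [hI.indep.insert_indep_iff_of_notMem hykI] at hIndep
      exact hIndep.2 heCl
  · rw [hE hΘ]; exact Set.subset_union_left

lemma flat_cases (hn : 3 ≤ n) {F : Set α} (hF : Θ.IsFlat F) :
    Set.range x ⊆ F ∨ (F ∩ Set.range x).Subsingleton := by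
  by_cases hsub : (F ∩ Set.range x).Subsingleton
  · exact Or.inr hsub
  left
  rw [Set.not_subsingleton_iff] at hsub
  obtain ⟨a, ⟨haF, ⟨p, rfl⟩⟩, b, ⟨hbF, ⟨q, rfl⟩⟩, hab⟩ := hsub
  rintro e ⟨l, rfl⟩
  set I : Set α := {x p, x q} with hIdef
  have hIX : I ⊆ Set.range x := by
    rintro a (rfl | rfl) <;> exact Set.mem_range_self _
  have hIindep : Θ.Indep I :=
    (indep_subset_X_iff hΘ hn hIX).2 (by rw [hIdef, Set.ncard_pair hab])
  by_cases hlI : x l ∈ I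
  · rcases hlI with h | h
    · exact h ▸ haF
    · exact (Set.mem_singleton_iff.1 h) ▸ hbF
  have hdep : ¬ Θ.Indep (insert (x l) I) := by
    intro hind
    have h3 : (insert (x l) I).ncard = 3 := by
      rw [Set.ncard_insert_of_notMem hlI (Set.toFinite I), hIdef, Set.ncard_pair hab]
    have := (indep_subset_X_iff hΘ hn ?_).1 hind
    · omega
    · rw [Set.insert_subset_iff]
      exact ⟨Set.mem_range_self l, hIX⟩
  have hmem : x l ∈ Θ.closure I :=
    mem_closure_of_dep hΘ hIindep (by rw [hE hΘ]; exact Or.inl (Set.mem_range_self l)) hlI hdep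
  have hIF : I ⊆ F := by rintro a (rfl | rfl) <;> assumption
  have := (Θ.closure_subset_closure hIF) hmem
  rwa [hF.closure] at this

lemma mRk_eq_ncard_of_indep {F : Set α} (hI : Θ.Indep F) : mRk Θ F = F.ncard :=
  mRk_eq_of ⟨F, hI, le_rfl, rfl⟩
    (fun I _ hIF => Set.ncard_le_ncard hIF (indep_finite hΘ hI))

lemma mRk_empty : mRk Θ (∅ : Set α) = 0 := by
  rw [mRk_eq_ncard_of_indep hΘ Θ.empty_indep, Set.ncard_empty]

lemma mRk_singleton_x (hn : 3 ≤ n) (j : Fin n) : mRk Θ ({x j} : Set α) = 1 := by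
  rw [mRk_eq_ncard_of_indep hΘ ((indep_subset_X_iff hΘ hn (by simp)).2
    (by rw [Set.ncard_singleton]; omega)), Set.ncard_singleton]

lemma mRk_X (hn : 3 ≤ n) : mRk Θ (Set.range x) = 2 := by
  refine mRk_eq_of ?_ ?_
  · obtain ⟨Q, -, hQ⟩ := Set.exists_subset_card_eq
      (show 2 ≤ (Set.univ : Set (Fin n)).ncard by rw [univ_ncard]; omega)
    refine ⟨x '' Q, ?_, Set.image_subset_range x Q, ?_⟩
    · have := indep_mix hΘ (n := n) (by omega) (T := ∅) (Q := Q)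
        (by rw [Set.ncard_empty]; omega) (by omega)
      rwa [Set.image_empty, Set.empty_union] at this
    · rw [Set.ncard_image_of_injective _ (hx hΘ), hQ]
  · intro I hI hIX
    exact (indep_subset_X_iff hΘ hn hIX).1 hI

lemma mRank_eq (hn : 3 ≤ n) : mRank Θ = n := by
  refine mRk_eq_of ⟨Set.range y, (base_Y hΘ).indep, ?_, rangeY_ncard hΘ⟩
    (fun I hI _ => indep_le_n hΘ (by omega) hI)
  rw [hE hΘ]; exact Set.subset_union_right

/-- Upper bound for the rank of `X ∪ S`. -/
lemma rk_union_upper {S I : Set α} (hS : S.Finite) (hI : Θ.Indep I)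
    (hIsub : I ⊆ Set.range x ∪ S) (hn : 2 ≤ n) : I.ncard ≤ 2 + S.ncard := by
  have hIfin : I.Finite := indep_finite hΘ hI
  have hsplit : I = (I ∩ Set.range x) ∪ (I \ Set.range x) := (Set.inter_union_diff I _).symm
  have hle : I.ncard ≤ (I ∩ Set.range x).ncard + (I \ Set.range x).ncard := by
    nth_rewrite 1 [hsplit]
    exact Set.ncard_union_le _ _
  have h1 : (I ∩ Set.range x).ncard ≤ 2 := indep_inter_X hΘ hn hI
  have h2 : (I \ Set.range x).ncard ≤ S.ncard := by
    refine Set.ncard_le_ncard ?_ hS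
    rintro a ⟨haI, hax⟩
    rcases hIsub haI with h | h
    · exact absurd h hax
    · exact h
  omega

/-- The rank of `X ∪ y''T` equals `T.ncard + 2` when `T.ncard + 2 ≤ n`. -/
lemma mRk_X_union (hn : 3 ≤ n) {T : Set (Fin n)} (ht : T.ncard + 2 ≤ n) :
    mRk Θ (Set.range x ∪ y '' T) = T.ncard + 2 := by
  refine mRk_eq_of ?_ ?_
  · obtain ⟨Q, -, hQ⟩ := Set.exists_subset_card_eq
      (show 2 ≤ (Set.univ : Set (Fin n)).ncard by rw [univ_ncard]; omega)
    refine ⟨y '' T ∪ x '' Q, indep_mix hΘ (by omega) ht (by omega), ?_, ?_⟩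
    · exact Set.union_subset (Set.subset_union_right)
        ((Set.image_subset_range x Q).trans Set.subset_union_left)
    · rw [Set.ncard_union_eq ?_ (T.toFinite.image y) (Q.toFinite.image x),
        Set.ncard_image_of_injective _ (hy hΘ), Set.ncard_image_of_injective _ (hx hΘ), hQ]
      rw [Set.disjoint_right]
      rintro a ⟨q, hq, rfl⟩ ⟨t, ht', hteq⟩
      exact xnotY hΘ q (hteq ▸ Set.mem_range_self t)
  · intro I hI hIsub
    have := rk_union_upper hΘ (T.toFinite.image y) hI hIsub (by omega)
    rw [Set.ncard_image_of_injective _ (hy hΘ)] at this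
    omega

lemma D1_ncard (hn : 1 ≤ n) (j : Fin n) :
    ({x j} ∪ (Set.range y \ {y j}) : Set α).ncard = n := by
  have hdisj : Disjoint ({x j} : Set α) (Set.range y \ {y j}) := by
    rw [Set.disjoint_singleton_left]
    rintro ⟨hmem, -⟩
    exact xnotY hΘ j hmem
  rw [Set.ncard_union_eq hdisj (Set.finite_singleton _) ((Set.finite_range y).diff),
    Set.ncard_singleton,
    Set.ncard_diff (Set.singleton_subset_iff.2 (Set.mem_range_self j)) (Set.finite_singleton _),
    Set.ncard_singleton, rangeY_ncard hΘ]
  omega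

lemma image_compl_singleton (i : Fin n) :
    y '' ({i}ᶜ : Set (Fin n)) = Set.range y \ {y i} := by
  ext a
  constructor
  · rintro ⟨t, hti, rfl⟩
    refine ⟨Set.mem_range_self t, fun h => hti ?_⟩
    exact Set.mem_singleton_iff.2 (hy hΘ (Set.mem_singleton_iff.1 h))
  · rintro ⟨⟨t, rfl⟩, hne⟩
    exact ⟨t, fun h => hne (by rw [Set.mem_singleton_iff.1 h]; rfl), rfl⟩

end Theta

end ThetaAux

/-- For `n ≥ 3`, the set `X = {x 1, …, x n}` is a modular flat of
`Θ_n`, and `Θ_n|X` is isomorphic to the rank-2 uniform matroid `U_{2,n}`. -/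
theorem theta_segment_modular_uniform (n : ℕ) (hn : 3 ≤ n) (x y : Fin n → α)
    (Θ : Matroid α) (hΘ : IsTheta n x y Θ) :
    IsModFlat Θ (Set.range x) ∧ RestrIsU2 Θ (Set.range x) n := by
  have hflat : Θ.IsFlat (Set.range x) := ThetaAux.X_flat hΘ hn
  refine ⟨⟨hflat, ?_⟩, by rw [ThetaAux.hE hΘ]; exact Set.subset_union_left,
    ThetaAux.rangeX_ncard hΘ, fun S hS => ThetaAux.indep_subset_X_iff hΘ hn hS⟩
  intro F hF
  rcases ThetaAux.flat_cases hΘ hn hF with hXF | hss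
  · rw [Set.inter_eq_left.2 hXF, Set.union_eq_right.2 hXF]
  set T : Set (Fin n) := y ⁻¹' F with hT
  have hFsub : F ⊆ Set.range x ∪ Set.range y := (ThetaAux.hE hΘ) ▸ hF.subset_ground
  have himg : y '' T = F ∩ Set.range y := by
    rw [hT, Set.image_preimage_eq_inter_range]
  have hdecomp : F = (F ∩ Set.range x) ∪ y '' T := by
    rw [himg]; ext a
    constructor
    · intro haF
      rcases hFsub haF with h | h
      exacts [Or.inl ⟨haF, h⟩, Or.inr ⟨haF, h⟩]
    · rintro (⟨h, -⟩ | ⟨h, -⟩) <;> exact h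
  have hyTF : y '' T ⊆ F := by rw [himg]; exact Set.inter_subset_left
  have htle : T.ncard ≤ n := by
    have := Set.ncard_le_ncard (Set.subset_univ T) Set.finite_univ
    rwa [ThetaAux.univ_ncard] at this
  have hyTcard : (y '' T).ncard = T.ncard := Set.ncard_image_of_injective _ (ThetaAux.hy hΘ)
  have hFfin : F.Finite := (ThetaAux.finE hΘ).subset hF.subset_ground
  rcases hss.eq_empty_or_singleton with h0 | ⟨a, ha⟩
  · -- Case `F ∩ X = ∅`
    have hFeq : F = y '' T := by rw [hdecomp, h0, Set.empty_union]
    have ht2 : T.ncard + 2 ≤ n := by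
      by_contra hcon
      rcases (by omega : T.ncard = n ∨ n = T.ncard + 1) with hteq | hteq
      · -- `T = univ`, so `F` contains the base `Y` and hence is the ground set
        have hTuniv : T = Set.univ := Set.eq_of_subset_of_ncard_le (Set.subset_univ T)
          (by rw [ThetaAux.univ_ncard, hteq]) Set.finite_univ
        have hYF : Set.range y ⊆ F := by rw [hFeq, hTuniv, Set.image_univ]
        have hFE : F = Θ.E :=
          ThetaAux.flat_eq_ground_of_base_subset hΘ hF (ThetaAux.base_Y hΘ) hYF
        have hj : (⟨0, by omega⟩ : Fin n) = ⟨0, by omega⟩ := rfl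
        set j : Fin n := ⟨0, by omega⟩
        have : x j ∈ F ∩ Set.range x := by
          refine ⟨?_, Set.mem_range_self j⟩
          rw [hFE, ThetaAux.hE hΘ]
          exact Or.inl (Set.mem_range_self j)
        rw [h0] at this
        exact this
      · -- `Tᶜ = {i}`, so `F = Y \ {y i}` and `x i ∈ cl F = F`, a contradiction
        have hTc1 : Tᶜ.ncard = 1 := by
          have h := Set.ncard_add_ncard_compl T
          rw [Nat.card_eq_fintype_card, Fintype.card_fin] at h; omega
        obtain ⟨i, hi⟩ := Set.ncard_eq_one.1 hTc1
        have hTeq : T = ({i}ᶜ : Set (Fin n)) := by rw [← hi, compl_compl]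
        have hFeq2 : F = Set.range y \ {y i} := by
          rw [hFeq, hTeq, ThetaAux.image_compl_singleton hΘ]
        have hFindep : Θ.Indep F :=
          ThetaAux.indep_sub_Y hΘ (by rw [hFeq2]; exact Set.diff_subset)
        have hxiF : x i ∉ F := by
          rw [hFeq2]
          rintro ⟨hmem, -⟩
          exact ThetaAux.xnotY hΘ i hmem
        have hdep : ¬ Θ.Indep (insert (x i) F) := by
          rw [hFeq2, ← Set.singleton_union]
          exact ThetaAux.dep_D1 hΘ hn i
        have hmem : x i ∈ Θ.closure F :=
          ThetaAux.mem_closure_of_dep hΘ hFindep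
            (by rw [ThetaAux.hE hΘ]; exact Or.inl (Set.mem_range_self i)) hxiF hdep
        rw [hF.closure] at hmem
        exact hxiF hmem
    have hr1 : mRk Θ F = T.ncard := by
      rw [hFeq, ThetaAux.mRk_eq_ncard_of_indep hΘ
        (ThetaAux.indep_sub_Y hΘ (Set.image_subset_range y T)), hyTcard]
    have hr2 : mRk Θ (Set.range x ∩ F) = 0 := by
      rw [Set.inter_comm, h0, ThetaAux.mRk_empty hΘ]
    have hr3 : mRk Θ (Set.range x ∪ F) = T.ncard + 2 := by
      rw [hFeq]; exact ThetaAux.mRk_X_union hΘ hn ht2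
    rw [ThetaAux.mRk_X hΘ hn, hr1, hr2, hr3]
    omega
  · -- Case `F ∩ X = {x j}`
    obtain ⟨j, rfl⟩ : ∃ j, x j = a := by
      have : a ∈ F ∩ Set.range x := ha ▸ rfl
      exact this.2
    have hxjF : x j ∈ F := by
      have : x j ∈ F ∩ Set.range x := ha ▸ rfl
      exact this.1
    have hFeq : F = {x j} ∪ y '' T := by rw [hdecomp, ha]
    have hXne : ∀ l : Fin n, x l ∈ F → l = j := by
      intro l hl
      have : x l ∈ F ∩ Set.range x := ⟨hl, Set.mem_range_self l⟩
      rw [ha] at this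
      exact ThetaAux.hx hΘ (Set.mem_singleton_iff.1 this)
    have hFnE : F ≠ Θ.E := by
      intro hFE
      obtain ⟨l, hl⟩ := ThetaAux.exists_ne_index hΘ hn j
      refine hl (hXne l ?_)
      rw [hFE, ThetaAux.hE hΘ]
      exact Or.inl (Set.mem_range_self l)
    have htn : T.ncard ≠ n := by
      intro hteq
      apply hFnE
      refine ThetaAux.flat_eq_ground_of_base_subset hΘ hF (ThetaAux.base_Y hΘ) ?_
      have hTuniv : T = Set.univ := Set.eq_of_subset_of_ncard_le (Set.subset_univ T)
        (by rw [ThetaAux.univ_ncard, hteq]) Set.finite_univ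
      rw [← Set.image_univ, ← hTuniv]
      exact hyTF
    have hr2 : mRk Θ (Set.range x ∩ F) = 1 := by
      rw [Set.inter_comm, ha, ThetaAux.mRk_singleton_x hΘ hn j]
    rcases (by omega : T.ncard + 2 ≤ n ∨ n = T.ncard + 1) with ht2 | hteq
    · -- generic case: `F = {x j} ∪ y''T` with `|T| ≤ n - 2`
      have hFindep : Θ.Indep F := by
        have := ThetaAux.indep_mix hΘ (n := n) (by omega) (T := T) (Q := {j}) ht2
          (by rw [Set.ncard_singleton]; omega)
        rw [Set.image_singleton] at this
        rw [hFeq, Set.union_comm]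
        exact this
      have hdisj : Disjoint ({x j} : Set α) (y '' T) := by
        rw [Set.disjoint_singleton_left]
        rintro ⟨t, -, hteq2⟩
        exact ThetaAux.xnotY hΘ j (hteq2 ▸ Set.mem_range_self t)
      have hFcard : F.ncard = T.ncard + 1 := by
        rw [hFeq, Set.ncard_union_eq hdisj (Set.finite_singleton _) (T.toFinite.image y),
          Set.ncard_singleton, hyTcard]
        omega
      have hr1 : mRk Θ F = T.ncard + 1 := by
        rw [ThetaAux.mRk_eq_ncard_of_indep hΘ hFindep, hFcard]
      have hr3 : mRk Θ (Set.range x ∪ F) = T.ncard + 2 := by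
        have heq : Set.range x ∪ F = Set.range x ∪ y '' T := by
          rw [hFeq, ← Set.union_assoc,
            Set.union_eq_self_of_subset_right
              (Set.singleton_subset_iff.2 (Set.mem_range_self j))]
        rw [heq]
        exact ThetaAux.mRk_X_union hΘ hn ht2
      rw [ThetaAux.mRk_X hΘ hn, hr1, hr2, hr3]
      omega
    · -- case `|T| = n - 1`: then `F = {x j} ∪ (Y \ {y j})`
      have hTc1 : Tᶜ.ncard = 1 := by
        have h := Set.ncard_add_ncard_compl T
        rw [Nat.card_eq_fintype_card, Fintype.card_fin] at h; omega
      obtain ⟨i, hi⟩ := Set.ncard_eq_one.1 hTc1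
      have hTeq : T = ({i}ᶜ : Set (Fin n)) := by rw [← hi, compl_compl]
      have hyT : y '' T = Set.range y \ {y i} := by
        rw [hTeq, ThetaAux.image_compl_singleton hΘ]
      have hij : i = j := by
        by_contra hij
        apply hFnE
        have hbase2 : Θ.IsBase ((Set.range y \ {y i}) ∪ {x j}) :=
          (ThetaAux.hB hΘ _).2 (Or.inr (Or.inl ⟨i, j, hij, rfl⟩))
        refine ThetaAux.flat_eq_ground_of_base_subset hΘ hF hbase2 ?_
        rw [← hyT]
        rintro b (hb | hb)
        · exact hyTF hb
        · exact (Set.mem_singleton_iff.1 hb) ▸ hxjF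
      rw [hij] at hyT
      have hFeq2 : F = {x j} ∪ (Set.range y \ {y j}) := by rw [hFeq, hyT]
      have hFdep : ¬ Θ.Indep F := by rw [hFeq2]; exact ThetaAux.dep_D1 hΘ hn j
      have hFcard : F.ncard = n := by rw [hFeq2]; exact ThetaAux.D1_ncard hΘ (by omega) j
      have hr1 : mRk Θ F = T.ncard := by
        refine ThetaAux.mRk_eq_of ⟨y '' T, ThetaAux.indep_sub_Y hΘ
          (by rw [hyT]; exact Set.diff_subset), hyTF, hyTcard⟩ ?_
        intro I hI hIF
        by_contra hcon
        push_neg at hcon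
        have hIcard : I.ncard ≤ F.ncard := Set.ncard_le_ncard hIF hFfin
        have hIeqF : I = F := Set.eq_of_subset_of_ncard_le hIF (by omega) hFfin
        exact hFdep (hIeqF ▸ hI)
      have hr3 : mRk Θ (Set.range x ∪ F) = n := by
        refine ThetaAux.mRk_eq_of ?_ (fun I hI _ => ThetaAux.indep_le_n hΘ (by omega) hI)
        obtain ⟨l, hl⟩ := ThetaAux.exists_ne_index hΘ hn j
        obtain ⟨Q, -, hQ⟩ := Set.exists_subset_card_eq
          (show 2 ≤ (Set.univ : Set (Fin n)).ncard by rw [ThetaAux.univ_ncard]; omega)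
        have hP : ({j, l} : Set (Fin n)).ncard = 2 := Set.ncard_pair (Ne.symm hl)
        have hbase3 : Θ.IsBase ((Set.range y \ y '' {j, l}) ∪ x '' Q) :=
          (ThetaAux.hB hΘ _).2 (Or.inr (Or.inr ⟨{j, l}, Q, hP, hQ, rfl⟩))
        refine ⟨_, hbase3.indep, ?_, ThetaAux.base_ncard hΘ (by omega) hbase3⟩
        rintro b (⟨hby, hbP⟩ | hb)
        · right
          rw [hFeq2]
          right
          refine ⟨hby, fun hb => hbP ?_⟩
          rw [Set.mem_singleton_iff.1 hb]
          exact ⟨j, Or.inl rfl, rfl⟩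
        · left
          obtain ⟨q, -, rfl⟩ := hb
          exact Set.mem_range_self q
      rw [ThetaAux.mRk_X hΘ hn, hr1, hr2, hr3]
      omega
end

section
/- Let K be a field, and let M1 and M2 be matroids on E1 and E2 with E1 ∩ E2 = {p}, where p is neither a loop nor a coloop of M1 or of M2. Then the 2-sum M1 ⊕_p M2 is representable over K if and only if both M1 and M2 are representable over K. -/
open Matroid Set
open Submodule
variable {α : Type*}

section LinHelpers
variable {α : Type*} {K : Type*} [Field K] {V : Type*} [AddCommGroup V] [Module K V]


/-- Linear dependence of the family `φ` restricted to `I`, via finsupps. -/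
def LinDep (K : Type*) [Field K] {α V : Type*} [AddCommGroup V] [Module K V]
    (φ : α → V) (I : Set α) : Prop :=
  ∃ c : α →₀ K, (c.support : Set α) ⊆ I ∧ Finsupp.linearCombination K φ c = 0 ∧ c ≠ 0

theorem linDep_iff {φ : α → V} {I : Set α} :
    LinDep K φ I ↔ ¬ LinearIndependent K (fun e : I => φ e) := by
  rw [show (fun e : I => φ e) = (φ ∘ (Subtype.val : I → α)) from rfl]
  rw [show LinearIndependent K (φ ∘ (Subtype.val : I → α)) ↔ LinearIndepOn K φ I from Iff.rfl,
    linearDepOn_iff']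
  simp only [Finsupp.mem_supported, LinDep]

theorem linIndep_iff {φ : α → V} {I : Set α} :
    LinearIndependent K (fun e : I => φ e) ↔ ¬ LinDep K φ I := by
  rw [linDep_iff]; tauto

theorem comb_congr {φ φ' : α → V} {c : α →₀ K} (h : ∀ a ∈ (c.support : Set α), φ a = φ' a) :
    Finsupp.linearCombination K φ c = Finsupp.linearCombination K φ' c := by
  simp only [Finsupp.linearCombination_apply]
  exact Finsupp.sum_congr fun a ha => by rw [h a ha]

theorem comb_eq_zero {φ : α → V} {c : α →₀ K} (h : ∀ a ∈ (c.support : Set α), φ a = 0) :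
    Finsupp.linearCombination K φ c = 0 := by
  simp only [Finsupp.linearCombination_apply, Finsupp.sum]
  exact Finset.sum_eq_zero fun a ha => by rw [h a ha, smul_zero]

theorem comb_mem_span {φ : α → V} {c : α →₀ K} {I : Set α} (h : (c.support : Set α) ⊆ I) :
    Finsupp.linearCombination K φ c ∈ span K (φ '' I) := by
  rw [Finsupp.mem_span_image_iff_linearCombination]
  exact ⟨c, Finsupp.mem_supported K c |>.2 h, rfl⟩

theorem mem_span_iff_comb {φ : α → V} {x : V} {I : Set α} :
    x ∈ span K (φ '' I) ↔ ∃ c : α →₀ K, (c.support : Set α) ⊆ I ∧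
      Finsupp.linearCombination K φ c = x := by
  rw [Finsupp.mem_span_image_iff_linearCombination]
  simp only [Finsupp.mem_supported]

theorem linDep_mono {φ : α → V} {I J : Set α} (hIJ : I ⊆ J) (h : LinDep K φ I) :
    LinDep K φ J := by
  obtain ⟨c, hs, hc, h0⟩ := h
  exact ⟨c, hs.trans hIJ, hc, h0⟩

theorem linDep_congr {φ φ' : α → V} {I : Set α} (h : ∀ a ∈ I, φ a = φ' a)
    (hd : LinDep K φ I) : LinDep K φ' I := by
  obtain ⟨c, hs, hc, h0⟩ := hd
  refine ⟨c, hs, ?_, h0⟩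
  rw [← comb_congr fun a ha => h a (hs ha)]
  exact hc

theorem linDep_insert_of_mem_span {φ : α → V} {I : Set α} {e : α}
    (hx : φ e ∈ span K (φ '' I)) (he : e ∉ I) : LinDep K φ (insert e I) := by
  classical
  obtain ⟨l, hl, hcomb⟩ := mem_span_iff_comb.1 hx
  refine ⟨l - Finsupp.single e 1, ?_, ?_, ?_⟩
  · intro a ha
    rw [Finset.mem_coe] at ha
    rcases Finset.mem_union.1 (Finsupp.support_sub ha) with h | h
    · exact subset_insert _ _ (hl h)
    · have : a = e := by simpa using Finsupp.support_single_subset h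
      rw [this]; exact mem_insert _ _
  · rw [map_sub, hcomb, Finsupp.linearCombination_single, one_smul, sub_self]
  · have hle : l e = 0 := Finsupp.notMem_support_iff.1 fun hc => he (hl hc)
    intro h0
    have := congrArg (fun f : α →₀ K => f e) h0
    simp [hle] at this

theorem mem_span_of_linDep_insert {φ : α → V} {I : Set α} {e : α}
    (hI : ¬ LinDep K φ I) (h : LinDep K φ (insert e I)) : φ e ∈ span K (φ '' I) := by
  classical
  by_cases he : e ∈ I
  · exact subset_span (mem_image_of_mem _ he)
  obtain ⟨c, hs, hc, h0⟩ := h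
  have hce : c e ≠ 0 := by
    intro hce
    refine hI ⟨c, ?_, hc, h0⟩
    intro a ha
    rcases hs ha with rfl | haI
    · exact absurd (Finsupp.mem_support_iff.1 ha) (by exact fun h => h hce)
    · exact haI
  have hkey : c e • φ e + Finsupp.linearCombination K φ (c.erase e) = 0 := by
    have h2 := congrArg (Finsupp.linearCombination K φ) (Finsupp.single_add_erase e c)
    rw [map_add, Finsupp.linearCombination_single, hc] at h2
    exact h2
  have herase : Finsupp.linearCombination K φ (c.erase e) ∈ span K (φ '' I) := by
    refine comb_mem_span ?_
    intro a ha
    rw [Finsupp.support_erase, Finset.mem_coe, Finset.mem_erase] at ha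
    rcases hs ha.2 with rfl | haI
    · exact absurd rfl ha.1
    · exact haI
  have h1 : c e • φ e = - Finsupp.linearCombination K φ (c.erase e) := by
    rw [eq_neg_iff_add_eq_zero]; exact hkey
  have h2 : φ e = (c e)⁻¹ • (c e • φ e) := by
    rw [smul_smul, inv_mul_cancel₀ hce, one_smul]
  rw [h2, h1]
  exact Submodule.smul_mem _ _ (Submodule.neg_mem _ herase)

theorem comb_comp_linear {W : Type*} [AddCommGroup W] [Module K W]
    (L : V →ₗ[K] W) (g : α → V) (c : α →₀ K) :
    Finsupp.linearCombination K (fun a => L (g a)) c =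
      L (Finsupp.linearCombination K g c) := by
  simp only [Finsupp.linearCombination_apply, Finsupp.sum, map_sum, map_smul]

theorem filter_eq_self_of_forall {c : α →₀ K} {P : α → Prop} [DecidablePred P]
    (h : ∀ a ∈ (c.support : Set α), P a) : c.filter P = c := by
  ext a
  rw [Finsupp.filter_apply]
  split_ifs with ha
  · rfl
  · exact (Finsupp.notMem_support_iff.1 fun hc => ha (h a hc)).symm

theorem filter_eq_zero_of_forall {c : α →₀ K} {P : α → Prop} [DecidablePred P]
    (h : ∀ a ∈ (c.support : Set α), ¬ P a) : c.filter P = 0 := by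
  ext a
  rw [Finsupp.filter_apply]
  split_ifs with ha
  · exact Finsupp.notMem_support_iff.1 fun hc => h a hc ha
  · rfl

theorem filter_sub' {c d : α →₀ K} {P : α → Prop} [DecidablePred P] :
    (c - d).filter P = c.filter P - d.filter P := by
  ext a
  simp only [Finsupp.filter_apply, Finsupp.sub_apply]
  split_ifs with ha
  · rfl
  · rw [sub_zero]

theorem finrank_span_image_le {φ : α → V} {B : Set α} (hB : B.Finite) :
    Module.finrank K (span K (φ '' B)) ≤ B.ncard := by
  classical
  haveI : Fintype (φ '' B) := (hB.image φ).fintype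
  refine le_trans (finrank_span_le_card (φ '' B)) ?_
  rw [← Set.ncard_eq_toFinset_card']
  exact Set.ncard_image_le hB

theorem ncard_le_finrank_span {φ : α → V} {B : Set α} (hB : B.Finite)
    (h : ¬ LinDep K φ B) : B.ncard ≤ Module.finrank K (span K (φ '' B)) := by
  classical
  haveI : Fintype (φ '' B) := (hB.image φ).fintype
  have hli : LinearIndependent K (fun e : B => φ e) := linIndep_iff.2 h
  have him : LinearIndependent K ((↑) : (φ '' B) → V) := (show LinearIndepOn K φ B from hli).id_image
  rw [finrank_span_set_eq_card him, ← Set.ncard_eq_toFinset_card']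
  rw [Set.ncard_image_of_injOn]
  exact Set.injOn_iff_injective.2 hli.injective

end LinHelpers

section MatroidHelpers
variable {M : Matroid α} {I C D : Set α} {e p : α}

theorem MCircuit.not_indep (h : MCircuit M C) : ¬ M.Indep C := h.2.1

theorem MCircuit.subset_ground (h : MCircuit M C) : C ⊆ M.E := h.1

theorem MCircuit.ssubset_indep (h : MCircuit M C) (hD : D ⊂ C) : M.Indep D := h.2.2 D hD

theorem MCircuit.nonempty (h : MCircuit M C) : C.Nonempty := by
  rcases C.eq_empty_or_nonempty with rfl | hne
  · exact absurd M.empty_indep h.not_indep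
  · exact hne

theorem exists_mcircuit_subset [M.Finite] (hIE : I ⊆ M.E) (hI : ¬ M.Indep I) :
    ∃ C ⊆ I, MCircuit M C := by
  have key : ∀ n (J : Set α), J.ncard = n → J ⊆ M.E → ¬ M.Indep J → ∃ C ⊆ J, MCircuit M C := by
    intro n
    induction n using Nat.strong_induction_on with
    | _ n ih =>
      intro J hn hJE hJ
      by_cases h : ∀ D ⊂ J, M.Indep D
      · exact ⟨J, Subset.rfl, hJE, hJ, h⟩
      · push_neg at h
        obtain ⟨D, hDJ, hD⟩ := h
        have hfin : J.Finite := M.set_finite J hJE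
        exact (ih D.ncard (hn ▸ Set.ncard_lt_ncard hDJ hfin) D rfl (hDJ.subset.trans hJE)
          hD).imp fun C hC => ⟨hC.1.trans hDJ.subset, hC.2⟩
  exact key I.ncard I rfl hIE hI

theorem indep_iff_no_mcircuit [M.Finite] (hIE : I ⊆ M.E) :
    M.Indep I ↔ ∀ C ⊆ I, ¬ MCircuit M C := by
  constructor
  · intro hI C hCI hC
    exact hC.not_indep (hI.subset hCI)
  · intro h
    by_contra hI
    obtain ⟨C, hCI, hC⟩ := exists_mcircuit_subset hIE hI
    exact h C hCI hC

theorem exists_fund_mcircuit [M.Finite] (hI : M.Indep I) (he : e ∈ M.E)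
    (hd : ¬ M.Indep (insert e I)) :
    ∃ C, MCircuit M C ∧ e ∈ C ∧ C \ {e} ⊆ I := by
  obtain ⟨C, hCI, hC⟩ := exists_mcircuit_subset (insert_subset he hI.subset_ground) hd
  have heC : e ∈ C := by
    by_contra heC
    exact hC.not_indep (hI.subset fun a ha => ((hCI ha).resolve_left (fun h => heC (h ▸ ha))))
  exact ⟨C, hC, heC, fun a ha => ((hCI ha.1).resolve_left ha.2)⟩

theorem indep_ncard_le_base [M.Finite] {B : Set α} (hI : M.Indep I) (hB : M.IsBase B) :
    I.ncard ≤ B.ncard := by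
  obtain ⟨B', hB', hIB'⟩ := hI.exists_isBase_superset
  rw [← hB'.ncard_eq_ncard_of_isBase hB]
  exact Set.ncard_le_ncard hIB' (M.set_finite B' hB'.subset_ground)

theorem not_indep_of_big [M.Finite] {B : Set α} (hIE : I ⊆ M.E) (hB : M.IsBase B)
    (h : B.ncard < I.ncard) : ¬ M.Indep I :=
  fun hI => absurd (indep_ncard_le_base hI hB) (not_le.2 h)

theorem mcircuit_mdelete_iff {M : Matroid α} (hpE : p ∈ M.E) {C : Set α} :
    MCircuit (mDelete M {p}) C ↔ MCircuit M C ∧ p ∉ C := by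
  have hg : (mDelete M {p}).E = M.E \ {p} := rfl
  constructor
  · rintro ⟨hCE, hdep, hmin⟩
    rw [hg] at hCE
    have hpC : p ∉ C := fun h => (hCE h).2 rfl
    refine ⟨⟨fun a ha => (hCE ha).1, fun h => hdep ?_, fun D hD => (hmin D hD).1⟩, hpC⟩
    exact Matroid.restrict_indep_iff.2 ⟨h, hCE⟩
  · rintro ⟨⟨hCE, hdep, hmin⟩, hpC⟩
    have hCE' : C ⊆ M.E \ {p} := fun a ha => ⟨hCE ha, fun h => hpC (h ▸ ha)⟩
    refine ⟨hCE', fun h => hdep (Matroid.restrict_indep_iff.1 h).1, fun D hD => ?_⟩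
    exact Matroid.restrict_indep_iff.2 ⟨hmin D hD, hD.subset.trans hCE'⟩

end MatroidHelpers

section TwoSum
variable {M1 M2 N : Matroid α} {E1 E2 : Set α} {p : α}

theorem indep_singleton_of_not_loop (hpE : p ∈ M1.E) (hl : ¬ MLoop M1 p) :
    M1.Indep {p} := by
  by_contra h
  exact hl ⟨hpE, h⟩

theorem hNC_swap
    (hNC : ∀ C : Set α, MCircuit N C ↔
      (MCircuit (mDelete M1 {p}) C ∨ MCircuit (mDelete M2 {p}) C ∨
        ∃ C1 C2, MCircuit M1 C1 ∧ p ∈ C1 ∧ MCircuit M2 C2 ∧ p ∈ C2 ∧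
          C = (C1 ∪ C2) \ {p})) :
    ∀ C : Set α, MCircuit N C ↔
      (MCircuit (mDelete M2 {p}) C ∨ MCircuit (mDelete M1 {p}) C ∨
        ∃ C1 C2, MCircuit M2 C1 ∧ p ∈ C1 ∧ MCircuit M1 C2 ∧ p ∈ C2 ∧
          C = (C1 ∪ C2) \ {p}) := by
  intro C
  rw [hNC]
  constructor
  · rintro (h | h | ⟨C1, C2, h1, hp1, h2, hp2, rfl⟩)
    · exact Or.inr (Or.inl h)
    · exact Or.inl h
    · exact Or.inr (Or.inr ⟨C2, C1, h2, hp2, h1, hp1, by rw [union_comm]⟩)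
  · rintro (h | h | ⟨C1, C2, h1, hp1, h2, hp2, rfl⟩)
    · exact Or.inr (Or.inl h)
    · exact Or.inl h
    · exact Or.inr (Or.inr ⟨C2, C1, h2, hp2, h1, hp1, by rw [union_comm]⟩)

theorem side_circuit (hE1 : M1.E = E1) (hE2 : M2.E = E2) (hp : E1 ∩ E2 = {p})
    (hl2 : ¬ MLoop M2 p)
    (hNC : ∀ C : Set α, MCircuit N C ↔
      (MCircuit (mDelete M1 {p}) C ∨ MCircuit (mDelete M2 {p}) C ∨
        ∃ C1 C2, MCircuit M1 C1 ∧ p ∈ C1 ∧ MCircuit M2 C2 ∧ p ∈ C2 ∧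
          C = (C1 ∪ C2) \ {p})) :
    ∀ C ⊆ E1, p ∉ C → (MCircuit N C ↔ MCircuit M1 C) := by
  have hpmem : p ∈ E1 ∩ E2 := by rw [hp]; exact rfl
  have hpE1 : p ∈ M1.E := hE1 ▸ hpmem.1
  have hpE2 : p ∈ M2.E := hE2 ▸ hpmem.2
  have hdisj : ∀ x, x ∈ E1 → x ∈ E2 → x = p := fun x h1 h2 => by
    have : x ∈ E1 ∩ E2 := ⟨h1, h2⟩
    rwa [hp] at this
  intro C hCE1 hpC
  rw [hNC]
  constructor
  · rintro (h | h | ⟨C1, C2, h1, hp1, h2, hp2, rfl⟩)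
    · exact ((mcircuit_mdelete_iff hpE1).1 h).1
    · -- C is a circuit of M2 \ p : impossible since C ⊆ E1
      obtain ⟨h2, hpC2⟩ := (mcircuit_mdelete_iff hpE2).1 h
      obtain ⟨x, hx⟩ := h2.nonempty
      exact absurd (hdisj x (hCE1 hx) (hE2 ▸ h2.subset_ground hx)) (fun he => hpC (he ▸ hx))
    · -- mixed circuit contained in E1 : C2 ⊆ {p}, contradiction
      exfalso
      have hC2p : C2 ⊆ {p} := by
        intro x hx
        by_contra hxp
        have hxC : x ∈ (C1 ∪ C2) \ {p} := ⟨Or.inr hx, hxp⟩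
        exact hxp (hdisj x (hCE1 hxC) (hE2 ▸ h2.subset_ground hx))
      exact h2.not_indep ((indep_singleton_of_not_loop hpE2 hl2).subset hC2p)
  · intro h
    exact Or.inl ((mcircuit_mdelete_iff hpE1).2 ⟨h, hpC⟩)

theorem side_indep (hE1 : M1.E = E1) (hE2 : M2.E = E2) (hp : E1 ∩ E2 = {p})
    (hl2 : ¬ MLoop M2 p) (hNE : N.E = (E1 ∪ E2) \ {p})
    [M1.Finite] [N.Finite]
    (hNC : ∀ C : Set α, MCircuit N C ↔
      (MCircuit (mDelete M1 {p}) C ∨ MCircuit (mDelete M2 {p}) C ∨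
        ∃ C1 C2, MCircuit M1 C1 ∧ p ∈ C1 ∧ MCircuit M2 C2 ∧ p ∈ C2 ∧
          C = (C1 ∪ C2) \ {p})) :
    ∀ S ⊆ E1 \ {p}, (N.Indep S ↔ M1.Indep S) := by
  intro S hS
  have hSN : S ⊆ N.E := hNE ▸ hS.trans (diff_subset_diff_left subset_union_left)
  have hSM : S ⊆ M1.E := hE1 ▸ hS.trans diff_subset
  rw [indep_iff_no_mcircuit hSN, indep_iff_no_mcircuit hSM]
  constructor
  · intro h C hCS hC
    exact h C hCS ((side_circuit hE1 hE2 hp hl2 hNC C (hCS.trans (hS.trans diff_subset))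
      (fun hpc => (hS (hCS hpc)).2 rfl)).2 hC)
  · intro h C hCS hC
    exact h C hCS ((side_circuit hE1 hE2 hp hl2 hNC C (hCS.trans (hS.trans diff_subset))
      (fun hpc => (hS (hCS hpc)).2 rfl)).1 hC)

end TwoSum

section Forward
variable {K : Type*} [Field K]

set_option maxHeartbeats 1000000 in
theorem forward_rep {M1 M2 N : Matroid α}
    [M1.Finite] [M2.Finite] {E1 E2 : Set α} {p : α}
    (hE1 : M1.E = E1) (hE2 : M2.E = E2) (hp : E1 ∩ E2 = {p})
    (hl1 : ¬ MLoop M1 p) (hl2 : ¬ MLoop M2 p)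
    (hc1 : ¬ MColoop M1 p) (hc2 : ¬ MColoop M2 p)
    (hNE : N.E = (E1 ∪ E2) \ {p})
    (hNC : ∀ C : Set α, MCircuit N C ↔
      (MCircuit (mDelete M1 {p}) C ∨ MCircuit (mDelete M2 {p}) C ∨
        ∃ C1 C2, MCircuit M1 C1 ∧ p ∈ C1 ∧ MCircuit M2 C2 ∧ p ∈ C2 ∧
          C = (C1 ∪ C2) \ {p}))
    (hN : RepOver K N) : RepOver K M1 := by
  classical
  have hpmem : p ∈ E1 ∩ E2 := by rw [hp]; exact rfl
  have hpE1 : p ∈ M1.E := hE1 ▸ hpmem.1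
  have hpE2 : p ∈ M2.E := hE2 ▸ hpmem.2
  have hdisj : ∀ x, x ∈ E1 → x ∈ E2 → x = p := fun x h1 h2 => by
    have : x ∈ E1 ∩ E2 := ⟨h1, h2⟩
    rwa [hp] at this
  have hE1fin : E1.Finite := hE1 ▸ M1.ground_finite
  have hE2fin : E2.Finite := hE2 ▸ M2.ground_finite
  haveI hNfin : N.Finite := ⟨by rw [hNE]; exact (hE1fin.union hE2fin).diff⟩
  have hp' : E2 ∩ E1 = {p} := by rw [inter_comm]; exact hp
  have hNE' : N.E = (E2 ∪ E1) \ {p} := by rw [hNE, union_comm]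
  have hNC' := hNC_swap hNC
  have hside1 := side_circuit hE1 hE2 hp hl2 hNC
  have hind1 := side_indep hE1 hE2 hp hl2 hNE hNC
  have hind2 := side_indep hE2 hE1 hp' hl1 hNE' hNC'
  -- unpack the representation of N
  obtain ⟨V, iG, iM, φ, hφ⟩ := hN
  letI := iG; letI := iM
  have hLD : ∀ S ⊆ N.E, (LinDep K φ S ↔ ¬ N.Indep S) := by
    intro S hS
    rw [hφ S hS]
    exact linDep_iff
  have hfull : ∀ C, MCircuit N C → ∃ c : α →₀ K, (c.support : Set α) = C ∧
      Finsupp.linearCombination K φ c = 0 := by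
    intro C hC
    obtain ⟨c, hs, hcomb, h0⟩ := (hLD C hC.subset_ground).2 hC.not_indep
    refine ⟨c, ?_, hcomb⟩
    by_contra hne
    have hss : (c.support : Set α) ⊂ C := ssubset_iff_subset_ne.2 ⟨hs, hne⟩
    exact (hLD _ (hss.subset.trans hC.subset_ground)).1 ⟨c, Subset.rfl, hcomb, h0⟩
      (hC.ssubset_indep hss)
  -- bases
  obtain ⟨B1, hB1, hpB1⟩ : ∃ B, M1.IsBase B ∧ p ∉ B := by
    unfold MColoop at hc1; push_neg at hc1; exact hc1 hpE1
  obtain ⟨B2, hB2, hpB2⟩ : ∃ B, M2.IsBase B ∧ p ∉ B := by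
    unfold MColoop at hc2; push_neg at hc2; exact hc2 hpE2
  obtain ⟨Bp2, hBp2, hpBp2⟩ := (indep_singleton_of_not_loop hpE2 hl2).exists_isBase_superset
  have hpBp2' : p ∈ Bp2 := hpBp2 rfl
  set I2 : Set α := Bp2 \ {p} with hI2def
  have hB1E : B1 ⊆ E1 \ {p} := fun a ha =>
    ⟨hE1 ▸ hB1.subset_ground ha, fun h => hpB1 (h ▸ ha)⟩
  have hB2E : B2 ⊆ E2 \ {p} := fun a ha =>
    ⟨hE2 ▸ hB2.subset_ground ha, fun h => hpB2 (h ▸ ha)⟩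
  have hI2E : I2 ⊆ E2 \ {p} := fun a ha =>
    ⟨hE2 ▸ hBp2.subset_ground ha.1, ha.2⟩
  have hdisj' : ∀ x, x ∈ E1 \ {p} → x ∈ E2 \ {p} → False := fun x h1 h2 =>
    h1.2 (hdisj x h1.1 h2.1)
  have hsub1N : E1 \ {p} ⊆ N.E := hNE ▸ diff_subset_diff_left subset_union_left
  have hsub2N : E2 \ {p} ⊆ N.E := hNE ▸ diff_subset_diff_left subset_union_right
  -- N-independence of B1 ∪ I2
  have hBp2eq : insert p I2 = Bp2 := insert_diff_singleton.trans (insert_eq_self.2 hpBp2')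
  have hII : N.Indep (B1 ∪ I2) := by
    rw [indep_iff_no_mcircuit ((union_subset (hB1E.trans hsub1N) (hI2E.trans hsub2N)))]
    intro C hCsub hC
    rcases (hNC C).1 hC with h | h | ⟨C1, C2, h1, hp1, h2, hp2, rfl⟩
    · obtain ⟨h1, hpC⟩ := mcircuit_mdelete_iff hpE1 |>.1 h
      have hCB1 : C ⊆ B1 := by
        intro x hx
        rcases hCsub hx with hx1 | hx2
        · exact hx1
        · exact absurd (hdisj x (hE1 ▸ h1.subset_ground hx) (hI2E hx2).1)
            (fun he => (hI2E hx2).2 he)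
      exact h1.not_indep (hB1.indep.subset hCB1)
    · obtain ⟨h2, hpC⟩ := mcircuit_mdelete_iff hpE2 |>.1 h
      have hCI2 : C ⊆ I2 := by
        intro x hx
        rcases hCsub hx with hx1 | hx2
        · exact absurd (hdisj x (hB1E hx1).1 (hE2 ▸ h2.subset_ground hx))
            (fun he => (hB1E hx1).2 he)
        · exact hx2
      exact h2.not_indep (hBp2.indep.subset (hCI2.trans (hBp2eq ▸ subset_insert p I2)))
    · have hC2I : C2 \ {p} ⊆ I2 := by
        intro x hx
        rcases hCsub ⟨Or.inr hx.1, hx.2⟩ with hx1 | hx2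
        · exact absurd (hdisj x (hB1E hx1).1 (hE2 ▸ h2.subset_ground hx.1))
            (fun he => hx.2 he)
        · exact hx2
      have : C2 ⊆ Bp2 := by
        rw [← hBp2eq]
        intro x hx
        by_cases hxp : x = p
        · exact hxp ▸ mem_insert p I2
        · exact subset_insert p I2 (hC2I ⟨hx, hxp⟩)
      exact h2.not_indep (hBp2.indep.subset this)
  -- spans
  set W1 : Submodule K V := span K (φ '' (E1 \ {p})) with hW1def
  set W2 : Submodule K V := span K (φ '' (E2 \ {p})) with hW2def
  haveI : FiniteDimensional K W1 := FiniteDimensional.span_of_finite K ((hE1fin.diff).image φ)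
  haveI : FiniteDimensional K W2 := FiniteDimensional.span_of_finite K ((hE2fin.diff).image φ)
  haveI : FiniteDimensional K ↥(W1 ⊔ W2) := Submodule.finiteDimensional_sup W1 W2
  haveI : FiniteDimensional K ↥(W1 ⊓ W2) := Submodule.finiteDimensional_of_le inf_le_left
  have span_basis : ∀ X B : Set α, N.IsBasis B X →
      span K (φ '' X) = span K (φ '' B) := by
    intro X B hB
    refine le_antisymm ?_ (span_mono (image_mono (f := φ) hB.subset))
    rw [span_le]
    rintro _ ⟨e, he, rfl⟩
    by_cases heB : e ∈ B
    · exact subset_span (mem_image_of_mem φ heB)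
    · have hdep := hB.insert_dep ⟨he, heB⟩
      have hBind : ¬ LinDep K φ B := fun h =>
        (hLD B hB.indep.subset_ground).1 h hB.indep
      exact mem_span_of_linDep_insert hBind
        ((hLD _ hdep.subset_ground).2 hdep.not_indep)
  obtain ⟨B1s, hB1s⟩ := N.exists_isBasis (E1 \ {p}) hsub1N
  obtain ⟨B2s, hB2s⟩ := N.exists_isBasis (E2 \ {p}) hsub2N
  obtain ⟨BB, hBB⟩ := N.exists_isBasis N.E Subset.rfl
  have hW1span : W1 = span K (φ '' B1s) := span_basis _ _ hB1s
  have hW2span : W2 = span K (φ '' B2s) := span_basis _ _ hB2s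
  -- cardinality bounds
  set r1 := B1.ncard with hr1def
  set r2 := B2.ncard with hr2def
  have hB1sfin : B1s.Finite := (hE1fin.diff).subset hB1s.subset
  have hB2sfin : B2s.Finite := (hE2fin.diff).subset hB2s.subset
  have hBBfin : BB.Finite := N.set_finite BB hBB.indep.subset_ground
  have hB1fin : B1.Finite := hE1fin.subset (hE1 ▸ hB1.subset_ground)
  have hB2fin : B2.Finite := hE2fin.subset (hE2 ▸ hB2.subset_ground)
  have hI2fin : I2.Finite := (hE2fin.diff).subset hI2E
  have hB1s_le : B1s.ncard ≤ r1 :=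
    indep_ncard_le_base ((hind1 B1s hB1s.subset).1 hB1s.indep) hB1
  have hB2s_le : B2s.ncard ≤ r2 :=
    indep_ncard_le_base ((hind2 B2s hB2s.subset).1 hB2s.indep) hB2
  -- the N-basis BB of the whole ground set
  have hpBB : p ∉ BB := fun h => (hNE ▸ hBB.indep.subset_ground h).2 rfl
  set BB1 := BB ∩ E1 with hBB1def
  set BB2 := BB \ E1 with hBB2def
  have hBB1E : BB1 ⊆ E1 \ {p} := fun a ha => ⟨ha.2, fun h => hpBB (h ▸ ha.1)⟩
  have hBB2E : BB2 ⊆ E2 \ {p} := by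
    intro a ha
    have haN := hNE ▸ hBB.indep.subset_ground ha.1
    rcases haN.1 with h | h
    · exact absurd h ha.2
    · exact ⟨h, haN.2⟩
  have hBB1ind : M1.Indep BB1 :=
    (hind1 BB1 hBB1E).1 (hBB.indep.subset inter_subset_left)
  have hBB2ind : M2.Indep BB2 :=
    (hind2 BB2 hBB2E).1 (hBB.indep.subset diff_subset)
  have hBBsplit : BB1.ncard + BB2.ncard = BB.ncard :=
    Set.ncard_inter_add_ncard_diff_eq_ncard BB E1 hBBfin
  have hBB1le : BB1.ncard ≤ r1 := indep_ncard_le_base hBB1ind hB1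
  have hBB2le : BB2.ncard ≤ r2 := indep_ncard_le_base hBB2ind hB2
  have hBBlt : BB1.ncard + BB2.ncard + 1 ≤ r1 + r2 := by
    by_contra hcon
    push_neg at hcon
    have heq1 : BB1.ncard = r1 := by omega
    have heq2 : BB2.ncard = r2 := by omega
    -- both sides full rank: build a mixed circuit inside BB
    have hdep1 : ¬ M1.Indep (insert p BB1) := by
      refine not_indep_of_big (insert_subset hpE1 (hE1 ▸ fun a ha => (hBB1E ha).1)) hB1 ?_
      rw [Set.ncard_insert_of_notMem (fun h => (hBB1E h).2 rfl) (hBBfin.inter_of_left E1)]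
      omega
    have hdep2 : ¬ M2.Indep (insert p BB2) := by
      refine not_indep_of_big (insert_subset hpE2 (hE2 ▸ fun a ha => (hBB2E ha).1)) hB2 ?_
      rw [Set.ncard_insert_of_notMem (fun h => (hBB2E h).2 rfl) (hBBfin.diff)]
      omega
    obtain ⟨C1, hC1, hpC1, hC1sub⟩ := exists_fund_mcircuit hBB1ind hpE1 hdep1
    obtain ⟨C2, hC2, hpC2, hC2sub⟩ := exists_fund_mcircuit hBB2ind hpE2 hdep2
    have hmix : MCircuit N ((C1 ∪ C2) \ {p}) :=
      (hNC _).2 (Or.inr (Or.inr ⟨C1, C2, hC1, hpC1, hC2, hpC2, rfl⟩))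
    have hsubBB : (C1 ∪ C2) \ {p} ⊆ BB := by
      rintro x ⟨hx | hx, hxp⟩
      · exact (hC1sub ⟨hx, hxp⟩).1
      · exact (hC2sub ⟨hx, hxp⟩).1
    exact hmix.not_indep (hBB.indep.subset hsubBB)
  -- finrank computations
  have hsup_eq : W1 ⊔ W2 = span K (φ '' N.E) := by
    rw [hNE, union_diff_distrib, image_union, span_union]
  have hsup_le : Module.finrank K ↥(W1 ⊔ W2) + 1 ≤ r1 + r2 := by
    have h1 : span K (φ '' N.E) = span K (φ '' BB) := span_basis _ _ hBB
    have h2 : Module.finrank K ↥(W1 ⊔ W2) ≤ BB.ncard := by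
      rw [hsup_eq, h1]
      exact finrank_span_image_le hBBfin
    omega
  have hI2card : I2.ncard + 1 = r2 := by
    have h1 : Bp2.ncard = r2 := hBp2.ncard_eq_ncard_of_isBase hB2
    rw [← h1, ← hBp2eq, Set.ncard_insert_of_notMem (fun h => h.2 rfl) hI2fin]
  have hsup_ge : r1 + r2 ≤ Module.finrank K ↥(W1 ⊔ W2) + 1 := by
    have hdisjBI : Disjoint B1 I2 :=
      Set.disjoint_left.2 fun a ha ha2 => hdisj' a (hB1E ha) (hI2E ha2)
    have hcard : (B1 ∪ I2).ncard = r1 + I2.ncard :=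
      Set.ncard_union_eq hdisjBI hB1fin hI2fin
    have hsub : span K (φ '' (B1 ∪ I2)) ≤ W1 ⊔ W2 := by
      rw [span_le]
      rintro _ ⟨e, he, rfl⟩
      rcases he with he | he
      · exact Submodule.mem_sup_left (subset_span (mem_image_of_mem φ (hB1E he)))
      · exact Submodule.mem_sup_right (subset_span (mem_image_of_mem φ (hI2E he)))
    have hle : (B1 ∪ I2).ncard ≤ Module.finrank K ↥(W1 ⊔ W2) := by
      refine le_trans (ncard_le_finrank_span (hB1fin.union hI2fin) ?_)
        (Submodule.finrank_mono hsub)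
      exact fun h => (hLD _ hII.subset_ground).1 h hII
    omega
  have hW1ge : r1 ≤ Module.finrank K W1 := by
    have hsub : span K (φ '' B1) ≤ W1 := span_mono (image_mono (f := φ) hB1E)
    refine le_trans (ncard_le_finrank_span hB1fin ?_) (Submodule.finrank_mono hsub)
    exact fun h => (hLD _ (hB1E.trans hsub1N)).1 h ((hind1 B1 hB1E).2 hB1.indep)
  have hW2ge : r2 ≤ Module.finrank K W2 := by
    have hsub : span K (φ '' B2) ≤ W2 := span_mono (image_mono (f := φ) hB2E)
    refine le_trans (ncard_le_finrank_span hB2fin ?_) (Submodule.finrank_mono hsub)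
    exact fun h => (hLD _ (hB2E.trans hsub2N)).1 h ((hind2 B2 hB2E).2 hB2.indep)
  have hW1le : Module.finrank K W1 ≤ r1 := by
    rw [show W1 = span K (φ '' B1s) from hW1span]
    exact le_trans (finrank_span_image_le hB1sfin) hB1s_le
  have hW2le : Module.finrank K W2 ≤ r2 := by
    rw [show W2 = span K (φ '' B2s) from hW2span]
    exact le_trans (finrank_span_image_le hB2sfin) hB2s_le
  have hsum := Submodule.finrank_sup_add_finrank_inf_eq W1 W2
  have hinf1 : Module.finrank K ↥(W1 ⊓ W2) = 1 := by omega
  -- extract a generator of the one-dimensional intersection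
  obtain ⟨w, hwmem, hw0⟩ : ∃ w ∈ W1 ⊓ W2, w ≠ 0 := by
    have hne : W1 ⊓ W2 ≠ ⊥ := by
      intro h
      rw [h, finrank_bot] at hinf1
      exact absurd hinf1 (by omega)
    exact (Submodule.ne_bot_iff _).1 hne
  have hwW1 : w ∈ W1 := hwmem.1
  have hwW2 : w ∈ W2 := hwmem.2
  have hpar : ∀ u, u ∈ W1 ⊓ W2 → u ≠ 0 → ∃ k : K, k ≠ 0 ∧ u = k • w := by
    intro u hu hu0
    have hw0' : (⟨w, hwmem⟩ : ↥(W1 ⊓ W2)) ≠ 0 := fun h => hw0 (congrArg Subtype.val h)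
    obtain ⟨k, hk⟩ := (finrank_eq_one_iff_of_nonzero' (⟨w, hwmem⟩ : ↥(W1 ⊓ W2)) hw0').1
      hinf1 ⟨u, hu⟩
    have hk' : k • w = u := congrArg Subtype.val hk
    refine ⟨k, fun h0 => hu0 ?_, hk'.symm⟩
    rw [← hk', h0, zero_smul]
  -- a fixed circuit of M2 through p
  have hdep2 : ¬ M2.Indep (insert p B2) := by
    refine not_indep_of_big (insert_subset hpE2 hB2.subset_ground) hB2 ?_
    rw [Set.ncard_insert_of_notMem hpB2 hB2fin]
    omega
  obtain ⟨C2, hC2, hpC2, hC2sub⟩ := exists_fund_mcircuit hB2.indep hpE2 hdep2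
  have hC2E : C2 ⊆ E2 := hE2 ▸ hC2.subset_ground
  have hC2E' : C2 \ {p} ⊆ E2 \ {p} := diff_subset_diff_left hC2E
  -- the representation of M1
  set φ1 : α → V := fun e => if e = p then w else φ e with hφ1def
  have hφ1p : φ1 p = w := by rw [hφ1def]; simp
  have hφ1eq : ∀ a : α, a ≠ p → φ1 a = φ a := by
    intro a ha
    rw [hφ1def]
    simp [ha]
  refine ⟨V, iG, iM, φ1, ?_⟩
  intro I hIE
  rw [hE1] at hIE
  rw [linIndep_iff]
  by_cases hpI : p ∈ I
  · -- case p ∈ I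
    set J : Set α := I \ {p} with hJdef
    have hJE : J ⊆ E1 \ {p} := diff_subset_diff_left hIE
    have hIJ : insert p J = I := insert_diff_singleton.trans (insert_eq_self.2 hpI)
    constructor
    · -- independent ⟹ no linear dependence
      rintro hI1 ⟨c, hsupp, hcomb, hc0⟩
      have hJind : M1.Indep J := hI1.subset diff_subset
      have hJN : N.Indep J := (hind1 J hJE).2 hJind
      set d := c.erase p with hddef
      have hd_supp : (d.support : Set α) ⊆ J := by
        intro a ha
        rw [Finset.mem_coe, hddef, Finsupp.support_erase, Finset.mem_erase] at ha
        exact ⟨hsupp ha.2, ha.1⟩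
      have hsplit : c p • w + Finsupp.linearCombination K φ d = 0 := by
        have h2 := congrArg (Finsupp.linearCombination K φ1) (Finsupp.single_add_erase p c)
        rw [map_add, Finsupp.linearCombination_single, hcomb, hφ1p] at h2
        rw [← h2, ← hddef]
        congr 1
        exact comb_congr fun a ha => (hφ1eq a (fun h => ((hd_supp ha).2) h)).symm
      by_cases hcp : c p = 0
      · have hdc : d = c := by
          rw [hddef]
          exact Finsupp.erase_of_notMem_support (fun h => Finsupp.mem_support_iff.1 h hcp)
        rw [hcp, zero_smul, zero_add] at hsplit
        refine (hLD J (hJE.trans hsub1N)).1 ⟨c, ?_, by rw [← hdc]; exact hsplit, hc0⟩ hJN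
        rw [← hdc]
        exact hd_supp
      · have hcombd : Finsupp.linearCombination K φ d = -(c p • w) :=
          eq_neg_of_add_eq_zero_right hsplit
        have hw_in_J : w ∈ span K (φ '' J) := by
          have h2 : (-(c p))⁻¹ • Finsupp.linearCombination K φ d = w := by
            rw [hcombd, ← neg_smul_neg, neg_neg, smul_smul,
              neg_inv, neg_neg, inv_mul_cancel₀ hcp, one_smul]
          rw [← h2]
          exact Submodule.smul_mem _ _ (comb_mem_span hd_supp)
        have hw_in_B2s : w ∈ span K (φ '' B2s) := by
          rw [show span K (φ '' B2s) = W2 from hW2span.symm]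
          exact hwW2
        obtain ⟨dJ, hdJs, hdJc⟩ := mem_span_iff_comb.1 hw_in_J
        obtain ⟨dB, hdBs, hdBc⟩ := mem_span_iff_comb.1 hw_in_B2s
        have hdJ0 : dJ ≠ 0 := fun h => hw0 (by rw [← hdJc, h, map_zero])
        obtain ⟨a, ha⟩ := Finsupp.support_nonempty_iff.2 hdJ0
        have hJB2s : ∀ x, x ∈ J → x ∈ B2s → False := fun x h1 h2 =>
          hdisj' x (hJE h1) (hB2s.subset h2)
        have hLDun : LinDep K φ (J ∪ B2s) := by
          refine ⟨dJ - dB, ?_, ?_, ?_⟩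
          · intro x hx
            rcases Finset.mem_union.1 (Finsupp.support_sub (Finset.mem_coe.1 hx)) with h | h
            · exact Or.inl (hdJs h)
            · exact Or.inr (hdBs h)
          · rw [map_sub, hdJc, hdBc, sub_self]
          · intro h0
            have := congrArg (fun f : α →₀ K => f a) h0
            have hdBa : dB a = 0 := Finsupp.notMem_support_iff.1
              (fun h => hJB2s a (hdJs ha) (hdBs h))
            simp only [Finsupp.sub_apply, Finsupp.coe_zero, Pi.zero_apply, hdBa, sub_zero] at this
            exact (Finsupp.mem_support_iff.1 ha) this
        have hUN : J ∪ B2s ⊆ N.E :=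
          union_subset (hJE.trans hsub1N) (hB2s.subset.trans hsub2N)
        have hdepU : ¬ N.Indep (J ∪ B2s) := (hLD _ hUN).1 hLDun
        obtain ⟨C, hCsub, hC⟩ := exists_mcircuit_subset hUN hdepU
        rcases (hNC C).1 hC with h | h | ⟨C1', C2', h1', hp1', h2', hp2', rfl⟩
        · obtain ⟨h1, hpC⟩ := mcircuit_mdelete_iff hpE1 |>.1 h
          have hCJ : C ⊆ J := by
            intro x hx
            rcases hCsub hx with hx1 | hx2
            · exact hx1
            · exact absurd (hdisj x (hE1 ▸ h1.subset_ground hx) (hB2s.subset hx2).1)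
                (fun he => (hB2s.subset hx2).2 he)
          exact h1.not_indep (hJind.subset hCJ)
        · obtain ⟨h2, hpC⟩ := mcircuit_mdelete_iff hpE2 |>.1 h
          have hCB : C ⊆ B2s := by
            intro x hx
            rcases hCsub hx with hx1 | hx2
            · exact absurd (hdisj x (hJE hx1).1 (hE2 ▸ h2.subset_ground hx))
                (fun he => (hJE hx1).2 he)
            · exact hx2
          exact hC.not_indep (hB2s.indep.subset hCB)
        · have hC1I : C1' ⊆ I := by
            rw [← hIJ]
            intro x hx
            by_cases hxp : x = p
            · exact hxp ▸ mem_insert p J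
            · have hxC : x ∈ (C1' ∪ C2') \ {p} := ⟨Or.inl hx, hxp⟩
              rcases hCsub hxC with hx1 | hx2
              · exact subset_insert p J hx1
              · exact absurd (hdisj x (hE1 ▸ h1'.subset_ground hx) (hB2s.subset hx2).1)
                  (fun he => hxp he)
          exact h1'.not_indep (hI1.subset hC1I)
    · -- no linear dependence ⟹ independent
      intro h
      by_contra hno
      obtain ⟨C1, hC1sub', hC1⟩ := exists_mcircuit_subset (hE1 ▸ hIE) hno
      by_cases hpC1 : p ∈ C1
      · -- use the fixed circuit C2 and parallelism in W1 ⊓ W2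
        have hC1E : C1 ⊆ E1 := hE1 ▸ hC1.subset_ground
        have hC1E' : C1 \ {p} ⊆ E1 \ {p} := diff_subset_diff_left hC1E
        have hD : MCircuit N ((C1 ∪ C2) \ {p}) :=
          (hNC _).2 (Or.inr (Or.inr ⟨C1, C2, hC1, hpC1, hC2, hpC2, rfl⟩))
        obtain ⟨c, hcs, hccomb⟩ := hfull _ hD
        set cA := c.filter (fun a => a ∈ E1) with hcAdef
        set cB := c.filter (fun a => ¬ a ∈ E1) with hcBdef
        have hcsplit : cA + cB = c := Finsupp.filter_pos_add_filter_neg c _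
        have hAsupp : (cA.support : Set α) = C1 \ {p} := by
          ext a
          rw [Finset.mem_coe, hcAdef, Finsupp.support_filter, Finset.mem_filter,
            ← Finset.mem_coe, hcs]
          constructor
          · rintro ⟨⟨hor, hxp⟩, hE⟩
            rcases hor with h | h
            · exact ⟨h, hxp⟩
            · exact absurd (hdisj a hE (hC2E h)) hxp
          · rintro ⟨h, hxp⟩
            exact ⟨⟨Or.inl h, hxp⟩, hC1E h⟩
        have hBsupp : (cB.support : Set α) = C2 \ {p} := by
          ext a
          rw [Finset.mem_coe, hcBdef, Finsupp.support_filter, Finset.mem_filter,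
            ← Finset.mem_coe, hcs]
          constructor
          · rintro ⟨⟨hor, hxp⟩, hE⟩
            rcases hor with h | h
            · exact absurd (hC1E h) hE
            · exact ⟨h, hxp⟩
          · rintro ⟨h, hxp⟩
            refine ⟨⟨Or.inr h, hxp⟩, fun hE => hxp (hdisj a hE (hC2E h))⟩
        set u := Finsupp.linearCombination K φ cB with hudef
        have hAU : Finsupp.linearCombination K φ cA + u = 0 := by
          rw [hudef, ← map_add, hcsplit]
          exact hccomb
        have huA : u = -(Finsupp.linearCombination K φ cA) :=
          eq_neg_of_add_eq_zero_right hAU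
        have hu_mem : u ∈ W1 ⊓ W2 := by
          constructor
          · rw [huA]
            refine Submodule.neg_mem _ (span_mono (image_mono (f := φ) hC1E') ?_)
            exact comb_mem_span (by rw [hAsupp])
          · exact span_mono (image_mono (f := φ) hC2E') (comb_mem_span (by rw [hBsupp]))
        have hC1pind : M1.Indep (C1 \ {p}) :=
          hC1.ssubset_indep (Set.sdiff_singleton_ssubset.2 hpC1)
        have hu0 : u ≠ 0 := by
          intro h0
          have hcA0 : Finsupp.linearCombination K φ cA = 0 := by
            rw [huA] at h0
            rw [← neg_neg (Finsupp.linearCombination K φ cA), h0, neg_zero]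
          have hcAne : cA ≠ 0 := by
            obtain ⟨a, haC, hap⟩ : ∃ a, a ∈ C1 ∧ a ≠ p := by
              by_contra hcon
              push_neg at hcon
              have : C1 ⊆ {p} := fun x hx => hcon x hx
              exact hC1.not_indep ((indep_singleton_of_not_loop hpE1 hl1).subset this)
            intro h0'
            have : a ∈ (cA.support : Set α) := by rw [hAsupp]; exact ⟨haC, hap⟩
            rw [h0'] at this
            simp at this
          exact (hLD _ (hC1E'.trans hsub1N)).1 ⟨cA, by rw [hAsupp], hcA0, hcAne⟩
            ((hind1 _ hC1E').2 hC1pind)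
        obtain ⟨k, hk0, hku⟩ := hpar u hu_mem hu0
        have hw_span : w ∈ span K (φ '' (C1 \ {p})) := by
          have hw_eq : w = k⁻¹ • u := by
            rw [hku, smul_smul, inv_mul_cancel₀ hk0, one_smul]
          rw [hw_eq, huA]
          exact Submodule.smul_mem _ _ (Submodule.neg_mem _
            (comb_mem_span (by rw [hAsupp])))
        obtain ⟨dA, hdAs, hdAc⟩ := mem_span_iff_comb.1 hw_span
        refine h ?_
        refine ⟨Finsupp.single p 1 - dA, ?_, ?_, ?_⟩
        · intro x hx
          rcases Finset.mem_union.1 (Finsupp.support_sub (Finset.mem_coe.1 hx)) with hh | hh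
          · have : x = p := by simpa using Finsupp.support_single_subset hh
            exact this ▸ hpI
          · exact hC1sub' (diff_subset (hdAs hh))
        · rw [map_sub, Finsupp.linearCombination_single, one_smul, hφ1p]
          rw [show Finsupp.linearCombination K φ1 dA = Finsupp.linearCombination K φ dA from
            comb_congr fun a ha => hφ1eq a (fun hh => (hdAs ha).2 hh)]
          rw [hdAc, sub_self]
        · intro h0
          have := congrArg (fun f : α →₀ K => f p) h0
          have hdAp : dA p = 0 := Finsupp.notMem_support_iff.1 (fun hh => (hdAs hh).2 rfl)
          simp [hdAp] at this
      · -- p ∉ C1 : C1 is itself a circuit of N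
        have hC1N : MCircuit N C1 := (hside1 C1 (hE1 ▸ hC1.subset_ground) hpC1).2 hC1
        have hLD1 : LinDep K φ C1 := (hLD C1 hC1N.subset_ground).2 hC1N.not_indep
        refine h (linDep_mono hC1sub' (linDep_congr (fun a ha => ?_) hLD1))
        exact (hφ1eq a (fun hh => hpC1 (hh ▸ ha))).symm
  · -- case p ∉ I
    have hIE' : I ⊆ E1 \ {p} := fun a ha => ⟨hIE ha, fun h => hpI (h ▸ ha)⟩
    rw [← hind1 I hIE']
    constructor
    · intro hNI hdep1
      exact (hLD I (hIE'.trans hsub1N)).1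
        (linDep_congr (fun a ha => hφ1eq a (fun h => hpI (h ▸ ha))) hdep1) hNI
    · intro hnd
      by_contra hNI
      exact hnd (linDep_congr (fun a ha => (hφ1eq a (fun h => hpI (h ▸ ha))).symm)
        ((hLD I (hIE'.trans hsub1N)).2 hNI))

end Forward

section Backward
variable {K : Type*} [Field K]

set_option maxHeartbeats 1000000 in
theorem backward_rep {M1 M2 N : Matroid α}
    [M1.Finite] [M2.Finite] {E1 E2 : Set α} {p : α}
    (hE1 : M1.E = E1) (hE2 : M2.E = E2) (hp : E1 ∩ E2 = {p})
    (hl1 : ¬ MLoop M1 p) (hl2 : ¬ MLoop M2 p)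
    (hNE : N.E = (E1 ∪ E2) \ {p})
    (hNC : ∀ C : Set α, MCircuit N C ↔
      (MCircuit (mDelete M1 {p}) C ∨ MCircuit (mDelete M2 {p}) C ∨
        ∃ C1 C2, MCircuit M1 C1 ∧ p ∈ C1 ∧ MCircuit M2 C2 ∧ p ∈ C2 ∧
          C = (C1 ∪ C2) \ {p}))
    (h1 : RepOver K M1) (h2 : RepOver K M2) : RepOver K N := by
  classical
  have hpmem : p ∈ E1 ∩ E2 := by rw [hp]; exact rfl
  have hpE1 : p ∈ M1.E := hE1 ▸ hpmem.1
  have hpE2 : p ∈ M2.E := hE2 ▸ hpmem.2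
  have hdisj : ∀ x, x ∈ E1 → x ∈ E2 → x = p := fun x hx1 hx2 => by
    have : x ∈ E1 ∩ E2 := ⟨hx1, hx2⟩
    rwa [hp] at this
  have hE1fin : E1.Finite := hE1 ▸ M1.ground_finite
  have hE2fin : E2.Finite := hE2 ▸ M2.ground_finite
  haveI hNfin : N.Finite := ⟨by rw [hNE]; exact (hE1fin.union hE2fin).diff⟩
  have hp' : E2 ∩ E1 = {p} := by rw [inter_comm]; exact hp
  have hNE' : N.E = (E2 ∪ E1) \ {p} := by rw [hNE, union_comm]
  have hNC' := hNC_swap hNC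
  have hind1 := side_indep hE1 hE2 hp hl2 hNE hNC
  have hind2 := side_indep hE2 hE1 hp' hl1 hNE' hNC'
  obtain ⟨V1, iG1, iM1, φ1, hφ1⟩ := h1
  letI := iG1; letI := iM1
  obtain ⟨V2, iG2, iM2, φ2, hφ2⟩ := h2
  letI := iG2; letI := iM2
  have hLD1 : ∀ S ⊆ M1.E, (LinDep K φ1 S ↔ ¬ M1.Indep S) := by
    intro S hS; rw [hφ1 S hS]; exact linDep_iff
  have hLD2 : ∀ S ⊆ M2.E, (LinDep K φ2 S ↔ ¬ M2.Indep S) := by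
    intro S hS; rw [hφ2 S hS]; exact linDep_iff
  set vp : V1 := φ1 p with hvpdef
  set wp : V2 := φ2 p with hwpdef
  have hvp0 : vp ≠ 0 := by
    intro h0
    refine (hLD1 {p} (singleton_subset_iff.2 hpE1)).1
      ⟨Finsupp.single p 1, ?_, ?_, ?_⟩ (indep_singleton_of_not_loop hpE1 hl1)
    · intro a ha
      simpa using Finsupp.support_single_subset (Finset.mem_coe.1 ha)
    · rw [Finsupp.linearCombination_single, one_smul, ← hvpdef, h0]
    · simp
  have hwp0 : wp ≠ 0 := by
    intro h0
    refine (hLD2 {p} (singleton_subset_iff.2 hpE2)).1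
      ⟨Finsupp.single p 1, ?_, ?_, ?_⟩ (indep_singleton_of_not_loop hpE2 hl2)
    · intro a ha
      simpa using Finsupp.support_single_subset (Finset.mem_coe.1 ha)
    · rw [Finsupp.linearCombination_single, one_smul, ← hwpdef, h0]
    · simp
  set Z : Submodule K (V1 × V2) := Submodule.span K {((vp, -wp) : V1 × V2)} with hZdef
  set g : α → V1 × V2 := fun e => if e ∈ E1 then (φ1 e, (0 : V2)) else ((0 : V1), φ2 e)
    with hgdef
  set ψ : α → (V1 × V2) ⧸ Z := fun e => Z.mkQ (g e) with hψdef
  have hg1 : ∀ c : α →₀ K, Finsupp.linearCombination K (fun a => (g a).1) c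
      = Finsupp.linearCombination K φ1 (c.filter (fun a => a ∈ E1)) := by
    intro c
    conv_lhs => rw [← Finsupp.filter_pos_add_filter_neg c (fun a => a ∈ E1)]
    rw [map_add]
    have hA : Finsupp.linearCombination K (fun a => (g a).1) (c.filter (fun a => a ∈ E1))
        = Finsupp.linearCombination K φ1 (c.filter (fun a => a ∈ E1)) := by
      refine comb_congr fun a ha => ?_
      have haE : a ∈ E1 := by
        have := Finset.mem_coe.1 ha
        rw [Finsupp.support_filter, Finset.mem_filter] at this
        exact this.2
      rw [hgdef]; simp [haE]
    have hB : Finsupp.linearCombination K (fun a => (g a).1)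
        (c.filter (fun a => ¬ a ∈ E1)) = 0 := by
      refine comb_eq_zero fun a ha => ?_
      have haE : ¬ a ∈ E1 := by
        have := Finset.mem_coe.1 ha
        rw [Finsupp.support_filter, Finset.mem_filter] at this
        exact this.2
      rw [hgdef]; simp [haE]
    rw [hA, hB, add_zero]
  have hg2 : ∀ c : α →₀ K, Finsupp.linearCombination K (fun a => (g a).2) c
      = Finsupp.linearCombination K φ2 (c.filter (fun a => ¬ a ∈ E1)) := by
    intro c
    conv_lhs => rw [← Finsupp.filter_pos_add_filter_neg c (fun a => a ∈ E1)]
    rw [map_add]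
    have hA : Finsupp.linearCombination K (fun a => (g a).2) (c.filter (fun a => a ∈ E1))
        = 0 := by
      refine comb_eq_zero fun a ha => ?_
      have haE : a ∈ E1 := by
        have := Finset.mem_coe.1 ha
        rw [Finsupp.support_filter, Finset.mem_filter] at this
        exact this.2
      rw [hgdef]; simp [haE]
    have hB : Finsupp.linearCombination K (fun a => (g a).2)
        (c.filter (fun a => ¬ a ∈ E1))
        = Finsupp.linearCombination K φ2 (c.filter (fun a => ¬ a ∈ E1)) := by
      refine comb_congr fun a ha => ?_
      have haE : ¬ a ∈ E1 := by
        have := Finset.mem_coe.1 ha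
        rw [Finsupp.support_filter, Finset.mem_filter] at this
        exact this.2
      rw [hgdef]; simp [haE]
    rw [hA, hB, zero_add]
  have hkey : ∀ c : α →₀ K, (Finsupp.linearCombination K ψ c = 0 ↔
      ∃ t : K, Finsupp.linearCombination K φ1 (c.filter (fun a => a ∈ E1)) = t • vp ∧
        Finsupp.linearCombination K φ2 (c.filter (fun a => ¬ a ∈ E1)) = -(t • wp)) := by
    intro c
    have hcomp : Finsupp.linearCombination K ψ c
        = Z.mkQ (Finsupp.linearCombination K g c) := comb_comp_linear Z.mkQ g c
    have hfst : (Finsupp.linearCombination K g c).1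
        = Finsupp.linearCombination K φ1 (c.filter (fun a => a ∈ E1)) := by
      rw [← hg1]
      exact (comb_comp_linear (LinearMap.fst K V1 V2) g c).symm
    have hsnd : (Finsupp.linearCombination K g c).2
        = Finsupp.linearCombination K φ2 (c.filter (fun a => ¬ a ∈ E1)) := by
      rw [← hg2]
      exact (comb_comp_linear (LinearMap.snd K V1 V2) g c).symm
    rw [hcomp, Submodule.mkQ_apply, Submodule.Quotient.mk_eq_zero, hZdef,
      Submodule.mem_span_singleton]
    constructor
    · rintro ⟨t, ht⟩
      refine ⟨t, ?_, ?_⟩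
      · rw [← hfst, ← ht]
        rfl
      · rw [← hsnd, ← ht]
        have h2' : (t • ((vp, -wp) : V1 × V2)).2 = t • (-wp) := rfl
        rw [h2', smul_neg]
    · rintro ⟨t, ht1, ht2⟩
      refine ⟨t, ?_⟩
      have : Finsupp.linearCombination K g c
          = ((Finsupp.linearCombination K g c).1, (Finsupp.linearCombination K g c).2) := rfl
      rw [this, hfst, hsnd, ht1, ht2]
      rw [Prod.smul_mk, smul_neg]
  refine ⟨(V1 × V2) ⧸ Z, inferInstance, inferInstance, ψ, ?_⟩
  intro I hIN
  rw [linIndep_iff]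
  have hpI : p ∉ I := fun h => (hNE ▸ hIN h).2 rfl
  set I1 : Set α := I ∩ E1 with hI1def
  set I2 : Set α := I \ E1 with hI2def
  have hI1E : I1 ⊆ E1 \ {p} := fun a ha => ⟨ha.2, fun h => hpI (h ▸ ha.1)⟩
  have hI2E : I2 ⊆ E2 \ {p} := by
    intro a ha
    have haN := hNE ▸ hIN ha.1
    rcases haN.1 with h | h
    · exact absurd h ha.2
    · exact ⟨h, haN.2⟩
  have hpI1 : p ∉ I1 := fun h => hpI h.1
  have hpI2 : p ∉ I2 := fun h => hpI h.1
  constructor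
  · rintro hNI ⟨c, hsupp, hcomb, hc0⟩
    set c1 := c.filter (fun a => a ∈ E1) with hc1def
    set c2 := c.filter (fun a => ¬ a ∈ E1) with hc2def
    have hsupp1 : (c1.support : Set α) ⊆ I1 := by
      intro a ha
      have := Finset.mem_coe.1 ha
      rw [hc1def, Finsupp.support_filter, Finset.mem_filter] at this
      exact ⟨hsupp this.1, this.2⟩
    have hsupp2 : (c2.support : Set α) ⊆ I2 := by
      intro a ha
      have := Finset.mem_coe.1 ha
      rw [hc2def, Finsupp.support_filter, Finset.mem_filter] at this
      exact ⟨hsupp this.1, this.2⟩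
    obtain ⟨t, ht1, ht2⟩ := (hkey c).1 hcomb
    have hI1ind : M1.Indep I1 := (hind1 I1 hI1E).1 (hNI.subset inter_subset_left)
    have hI2ind : M2.Indep I2 := (hind2 I2 hI2E).1 (hNI.subset diff_subset)
    by_cases ht : t = 0
    · rw [ht, zero_smul] at ht1 ht2
      rw [neg_zero] at ht2
      have hor : c1 ≠ 0 ∨ c2 ≠ 0 := by
        by_contra hcon
        push_neg at hcon
        refine hc0 ?_
        rw [← Finsupp.filter_pos_add_filter_neg c (fun a => a ∈ E1), ← hc1def, ← hc2def,
          hcon.1, hcon.2, add_zero]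
      rcases hor with h0 | h0
      · exact (hLD1 I1 (hE1 ▸ hI1E.trans diff_subset)).1 ⟨c1, hsupp1, ht1, h0⟩ hI1ind
      · exact (hLD2 I2 (hE2 ▸ hI2E.trans diff_subset)).1 ⟨c2, hsupp2, ht2, h0⟩ hI2ind
    · have hv : vp ∈ span K (φ1 '' I1) := by
        have : Finsupp.linearCombination K φ1 (t⁻¹ • c1) = vp := by
          rw [map_smul, ht1, smul_smul, inv_mul_cancel₀ ht, one_smul]
        rw [← this]
        exact comb_mem_span fun a ha => hsupp1 (Finsupp.support_smul (Finset.mem_coe.1 ha))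
      have hw : wp ∈ span K (φ2 '' I2) := by
        have : Finsupp.linearCombination K φ2 ((-t)⁻¹ • c2) = wp := by
          rw [map_smul, ht2, ← neg_smul, smul_smul,
            inv_mul_cancel₀ (neg_ne_zero.2 ht), one_smul]
        rw [← this]
        exact comb_mem_span fun a ha => hsupp2 (Finsupp.support_smul (Finset.mem_coe.1 ha))
      have hd1 : LinDep K φ1 (insert p I1) := linDep_insert_of_mem_span hv hpI1
      have hd2 : LinDep K φ2 (insert p I2) := linDep_insert_of_mem_span hw hpI2
      have hdep1 : ¬ M1.Indep (insert p I1) :=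
        (hLD1 _ (insert_subset hpE1 (hE1 ▸ hI1E.trans diff_subset))).1 hd1
      have hdep2 : ¬ M2.Indep (insert p I2) :=
        (hLD2 _ (insert_subset hpE2 (hE2 ▸ hI2E.trans diff_subset))).1 hd2
      obtain ⟨C1, hC1, hpC1, hC1sub⟩ := exists_fund_mcircuit hI1ind hpE1 hdep1
      obtain ⟨C2, hC2, hpC2, hC2sub⟩ := exists_fund_mcircuit hI2ind hpE2 hdep2
      have hmix : MCircuit N ((C1 ∪ C2) \ {p}) :=
        (hNC _).2 (Or.inr (Or.inr ⟨C1, C2, hC1, hpC1, hC2, hpC2, rfl⟩))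
      have hsubI : (C1 ∪ C2) \ {p} ⊆ I := by
        rintro x ⟨hx | hx, hxp⟩
        · exact (hC1sub ⟨hx, hxp⟩).1
        · exact (hC2sub ⟨hx, hxp⟩).1
      exact hmix.not_indep (hNI.subset hsubI)
  · intro h
    by_contra hNI
    obtain ⟨C, hCsub, hC⟩ := exists_mcircuit_subset hIN hNI
    rcases (hNC C).1 hC with hdel | hdel | ⟨C1, C2, h1, hp1, h2, hp2, rfl⟩
    · obtain ⟨hC1, hpC⟩ := mcircuit_mdelete_iff hpE1 |>.1 hdel
      have hCE1 : C ⊆ E1 := hE1 ▸ hC1.subset_ground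
      obtain ⟨c, hcs, hccomb, hc0⟩ := (hLD1 C (hE1 ▸ hCE1)).2 hC1.not_indep
      refine h ⟨c, hcs.trans hCsub, ?_, hc0⟩
      refine (hkey c).2 ⟨0, ?_, ?_⟩
      · rw [filter_eq_self_of_forall (fun a ha => hCE1 (hcs ha)), hccomb, zero_smul]
      · rw [filter_eq_zero_of_forall (fun a ha h' => h' (hCE1 (hcs ha))), map_zero,
          zero_smul, neg_zero]
    · obtain ⟨hC2, hpC⟩ := mcircuit_mdelete_iff hpE2 |>.1 hdel
      have hCE2 : C ⊆ E2 \ {p} := fun a ha =>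
        ⟨hE2 ▸ hC2.subset_ground ha, fun he => hpC (he ▸ ha)⟩
      have hCE1 : ∀ a ∈ C, ¬ a ∈ E1 := fun a ha h' =>
        (hCE2 ha).2 (hdisj a h' (hCE2 ha).1)
      obtain ⟨c, hcs, hccomb, hc0⟩ := (hLD2 C (hE2 ▸ fun a ha => (hCE2 ha).1)).2 hC2.not_indep
      refine h ⟨c, hcs.trans hCsub, ?_, hc0⟩
      refine (hkey c).2 ⟨0, ?_, ?_⟩
      · rw [filter_eq_zero_of_forall (fun a ha => hCE1 a (hcs ha)), map_zero, zero_smul]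
      · rw [filter_eq_self_of_forall (fun a ha => hCE1 a (hcs ha)), hccomb, zero_smul, neg_zero]
    · -- mixed circuit
      have hC1E : C1 ⊆ E1 := hE1 ▸ h1.subset_ground
      have hC2E : C2 ⊆ E2 := hE2 ▸ h2.subset_ground
      have hC1pind : M1.Indep (C1 \ {p}) := h1.ssubset_indep (Set.sdiff_singleton_ssubset.2 hp1)
      have hC2pind : M2.Indep (C2 \ {p}) := h2.ssubset_indep (Set.sdiff_singleton_ssubset.2 hp2)
      have hC1dep : LinDep K φ1 C1 := (hLD1 C1 h1.subset_ground).2 h1.not_indep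
      have hC2dep : LinDep K φ2 C2 := (hLD2 C2 h2.subset_ground).2 h2.not_indep
      have hins1 : insert p (C1 \ {p}) = C1 :=
        insert_diff_singleton.trans (insert_eq_self.2 hp1)
      have hins2 : insert p (C2 \ {p}) = C2 :=
        insert_diff_singleton.trans (insert_eq_self.2 hp2)
      have hv : vp ∈ span K (φ1 '' (C1 \ {p})) := by
        refine mem_span_of_linDep_insert ?_ (by rw [hins1]; exact hC1dep)
        exact fun hld => (hLD1 _ (hE1 ▸ (diff_subset.trans hC1E))).1 hld hC1pind
      have hw : wp ∈ span K (φ2 '' (C2 \ {p})) := by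
        refine mem_span_of_linDep_insert ?_ (by rw [hins2]; exact hC2dep)
        exact fun hld => (hLD2 _ (hE2 ▸ (diff_subset.trans hC2E))).1 hld hC2pind
      obtain ⟨d1, hd1s, hd1c⟩ := mem_span_iff_comb.1 hv
      obtain ⟨d2, hd2s, hd2c⟩ := mem_span_iff_comb.1 hw
      have hd1E : ∀ a ∈ (d1.support : Set α), a ∈ E1 := fun a ha => hC1E (hd1s ha).1
      have hd2E : ∀ a ∈ (d2.support : Set α), ¬ a ∈ E1 := fun a ha h' =>
        (hd2s ha).2 (hdisj a h' (hC2E (hd2s ha).1))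
      have hd10 : d1 ≠ 0 := fun h0 => hvp0 (by rw [← hd1c, h0, map_zero])
      obtain ⟨a, haa⟩ := Finsupp.support_nonempty_iff.2 hd10
      refine h ⟨d1 - d2, ?_, ?_, ?_⟩
      · intro x hx
        rcases Finset.mem_union.1 (Finsupp.support_sub (Finset.mem_coe.1 hx)) with hh | hh
        · exact hCsub ⟨Or.inl (hd1s hh).1, (hd1s hh).2⟩
        · exact hCsub ⟨Or.inr (hd2s hh).1, (hd2s hh).2⟩
      · refine (hkey (d1 - d2)).2 ⟨1, ?_, ?_⟩
        · rw [filter_sub', filter_eq_self_of_forall hd1E,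
            filter_eq_zero_of_forall (fun a2 ha2 => hd2E a2 ha2), sub_zero, hd1c, one_smul]
        · rw [filter_sub', filter_eq_zero_of_forall (fun a2 ha2 h' => h' (hd1E a2 ha2)),
            filter_eq_self_of_forall hd2E, zero_sub, map_neg, hd2c, one_smul]
      · intro h0
        have := congrArg (fun f : α →₀ K => f a) h0
        have hd2a : d2 a = 0 := Finsupp.notMem_support_iff.1
          (fun hh => hd2E a hh (hd1E a haa))
        simp only [Finsupp.sub_apply, Finsupp.coe_zero, Pi.zero_apply, hd2a, sub_zero] at this
        exact Finsupp.mem_support_iff.1 haa this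

end Backward

/-- The 2-sum `M1 ⊕_p M2` is representable over a field `K` if and
only if both `M1` and `M2` are representable over `K`. -/
theorem two_sum_representable (K : Type*) [Field K] (M1 M2 N : Matroid α)
    [M1.Finite] [M2.Finite] (E1 E2 : Set α) (p : α)
    (hE1 : M1.E = E1) (hE2 : M2.E = E2) (hp : E1 ∩ E2 = {p})
    (hl1 : ¬ MLoop M1 p) (hl2 : ¬ MLoop M2 p)
    (hc1 : ¬ MColoop M1 p) (hc2 : ¬ MColoop M2 p)
    (hNE : N.E = (E1 ∪ E2) \ {p})
    (hNC : ∀ C : Set α, MCircuit N C ↔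
      (MCircuit (mDelete M1 {p}) C ∨ MCircuit (mDelete M2 {p}) C ∨
        ∃ C1 C2, MCircuit M1 C1 ∧ p ∈ C1 ∧ MCircuit M2 C2 ∧ p ∈ C2 ∧
          C = (C1 ∪ C2) \ {p})) :
    RepOver K N ↔ (RepOver K M1 ∧ RepOver K M2) := by
  constructor
  · intro hN
    refine ⟨forward_rep hE1 hE2 hp hl1 hl2 hc1 hc2 hNE hNC hN, ?_⟩
    exact forward_rep hE2 hE1 (by rw [inter_comm]; exact hp) hl2 hl1 hc2 hc1
      (by rw [hNE, union_comm]) (hNC_swap hNC) hN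
  · rintro ⟨h1, h2⟩
    exact backward_rep hE1 hE2 hp hl1 hl2 hNE hNC h1 h2
end
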